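/- arXiv:1206.3120 — 10 statements merged into one kernel-verified Lean document; each statement's English description precedes it below -/
import Mathlib

section
/- Let x* ∈ B (so h(x*) = 1). Then the set C(x*) = {s ∈ ℝ^n : s_i ≥ 0 for all i, and ∑_{i=1}^n α_i(x*) s_i ≤ 1}, where α_i(x*) = (N̄_i − 1 + ∏_{j≠i}(1 + x*_j)) / (L_i N̄_i), is a convex subset of the rate region R and contains the boundary throughput vector s(x*, N̄). -/
open Finset

noncomputable def Xfun (n : ℕ) (a : ℝ) (x N : Fin n → ℝ) : ℝ :=
  a + (∑ k, (N k - 1) * x k) + (∏ k, (1 + x k)) - 1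

noncomputable def sVec (n : ℕ) (a : ℝ) (L x N : Fin n → ℝ) : Fin n → ℝ :=
  fun i => N i * L i * x i / Xfun n a x N

noncomputable def hfun (n : ℕ) (a : ℝ) (x : Fin n → ℝ) : ℝ :=
  (∑ i, x i / (1 + x i)) + (1 - a) / ∏ j, (1 + x j)

def rateRegion (n : ℕ) (a : ℝ) (L Nlo Nhi : Fin n → ℝ) : Set (Fin n → ℝ) :=
  {u | ∃ x N : Fin n → ℝ, (∀ i, 0 ≤ x i) ∧ (∀ i, Nlo i ≤ N i ∧ N i ≤ Nhi i) ∧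
    u = sVec n a L x N}

noncomputable def alpha (n : ℕ) (L Nhi xs : Fin n → ℝ) (i : Fin n) : ℝ :=
  (Nhi i - 1 + ∏ j ∈ Finset.univ.erase i, (1 + xs j)) / (L i * Nhi i)

def Cset (n : ℕ) (L Nhi xs : Fin n → ℝ) : Set (Fin n → ℝ) :=
  {sv | (∀ i, 0 ≤ sv i) ∧ ∑ i, alpha n L Nhi xs i * sv i ≤ 1}

/-! Write `Pᵢ = ∏_{j ≠ i} (1 + x*ⱼ)` and `Q = ∏ⱼ (1 + x*ⱼ)`. Multiplied by `Q`, the boundary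
equation `h(x*) = 1` reads `∑ x*ᵢ Pᵢ = Q - 1 + a`, so `X(x*, N̄) = ∑ x*ᵢ (N̄ᵢ - 1 + Pᵢ)`, which puts
`s(x*, N̄)` on the face `∑ αᵢ sᵢ = 1` of `C(x*)`.

A point `s ∈ C(x*)` equals `s(t c, N̄)` with `cᵢ = sᵢ / (Lᵢ N̄ᵢ)` as soon as `X(t c, N̄) = t`. The
difference `X(t c, N̄) - t` is `a > 0` at `t = 0`, and it is `≤ 0` where the ray `t c` meets the
tangent hyperplane at `x*` to the level set `∏ (1 + yⱼ) = Q`: there the product is at most `Q` by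
log-concavity, and `∑ αᵢ sᵢ ≤ 1` bounds the linear part. The intermediate value theorem gives `t`. -/

theorem Real.prod_le_exp_sum_sub_one {ι : Type*} (s : Finset ι) {r : ι → ℝ}
    (hr : ∀ i ∈ s, 0 ≤ r i) : ∏ i ∈ s, r i ≤ Real.exp (∑ i ∈ s, (r i - 1)) := by
  rw [Real.exp_sum]
  refine Finset.prod_le_prod hr fun i _ => ?_
  simpa using Real.add_one_le_exp (r i - 1)

section ProdOneAdd

variable {ι : Type*} [Fintype ι] [DecidableEq ι]

theorem sum_mul_prod_erase_eq_sum_div_mul_prod {f : ι → ℝ} (hf : ∀ i, f i ≠ 0) (z : ι → ℝ) :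
    ∑ i, z i * ∏ j ∈ univ.erase i, f j = (∑ i, z i / f i) * ∏ j, f j := by
  rw [Finset.sum_mul]
  refine Finset.sum_congr rfl fun i _ => ?_
  rw [← Finset.mul_prod_erase univ f (mem_univ i)]
  field_simp [hf i]

/-- `y ↦ ∏ (1 + yᵢ)` is log-concave, so below its tangent hyperplane at `x` it stays below its
value at `x`. -/
theorem prod_one_add_le_of_sum_mul_prod_erase_le {x y : ι → ℝ} (hx : ∀ i, 0 < 1 + x i)
    (hy : ∀ i, 0 ≤ 1 + y i)
    (h : ∑ i, y i * ∏ j ∈ univ.erase i, (1 + x j) ≤ ∑ i, x i * ∏ j ∈ univ.erase i, (1 + x j)) :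
    ∏ i, (1 + y i) ≤ ∏ i, (1 + x i) := by
  set Q := ∏ i, (1 + x i)
  have hQ : 0 < Q := Finset.prod_pos fun i _ => hx i
  have hratio : ∀ i, (1 + y i) / (1 + x i) - 1 = (y i - x i) / (1 + x i) := fun i => by
    field_simp [(hx i).ne']
    ring
  have hnonpos : ∑ i, ((1 + y i) / (1 + x i) - 1) ≤ 0 := by
    have hsum : (∑ i, ((1 + y i) / (1 + x i) - 1)) * Q ≤ 0 := by
      simp only [hratio]
      rw [← sum_mul_prod_erase_eq_sum_div_mul_prod (fun i => (hx i).ne')]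
      simp only [sub_mul, Finset.sum_sub_distrib]
      linarith
    nlinarith
  calc ∏ i, (1 + y i) = Q * ∏ i, ((1 + y i) / (1 + x i)) := by
        rw [← Finset.prod_mul_distrib]
        exact Finset.prod_congr rfl fun i _ => (mul_div_cancel₀ _ (hx i).ne').symm
    _ ≤ Q * Real.exp (∑ i, ((1 + y i) / (1 + x i) - 1)) := by
        gcongr
        exact Real.prod_le_exp_sum_sub_one _ fun i _ => div_nonneg (hy i) (hx i).le
    _ ≤ Q := mul_le_of_le_one_right hQ.le (Real.exp_le_one_iff.mpr hnonpos)

end ProdOneAdd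

section RateRegion

variable {n : ℕ} {a : ℝ}

theorem sum_mul_prod_erase_eq_of_hfun_eq_one {x : Fin n → ℝ} (hx : ∀ i, 0 < 1 + x i)
    (hB : hfun n a x = 1) :
    ∑ i, x i * ∏ j ∈ univ.erase i, (1 + x j) = ∏ i, (1 + x i) - 1 + a := by
  have hQ : ∏ i, (1 + x i) ≠ 0 := (Finset.prod_pos fun i _ => hx i).ne'
  rw [sum_mul_prod_erase_eq_sum_div_mul_prod (fun i => (hx i).ne'),
    eq_sub_of_add_eq hB]
  field_simp
  ring

theorem Xfun_eq_sum_of_hfun_eq_one {x : Fin n → ℝ} (hx : ∀ i, 0 < 1 + x i)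
    (hB : hfun n a x = 1) (N : Fin n → ℝ) :
    Xfun n a x N = ∑ i, x i * (N i - 1 + ∏ j ∈ univ.erase i, (1 + x j)) := by
  simp only [mul_add, Finset.sum_add_distrib, sum_mul_prod_erase_eq_of_hfun_eq_one hx hB, Xfun]
  simp only [mul_comm (x _)]
  ring

theorem le_Xfun {x N : Fin n → ℝ} (hx : ∀ i, 0 ≤ x i) (hN : ∀ i, 1 ≤ N i) :
    a ≤ Xfun n a x N := by
  have hsum : 0 ≤ ∑ k, (N k - 1) * x k :=
    Finset.sum_nonneg fun k _ => mul_nonneg (sub_nonneg.mpr (hN k)) (hx k)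
  have hprod : 1 ≤ ∏ k, (1 + x k) :=
    Finset.one_le_prod fun k _ => le_add_of_nonneg_right (hx k)
  unfold Xfun
  linarith

theorem convex_Cset (L Nhi xs : Fin n → ℝ) : Convex ℝ (Cset n L Nhi xs) := by
  have hlin : IsLinearMap ℝ fun sv : Fin n → ℝ => ∑ i, alpha n L Nhi xs i * sv i :=
    { map_add := fun u v => by simp only [Pi.add_apply, mul_add, Finset.sum_add_distrib]
      map_smul := fun r u => by
        simp only [Pi.smul_apply, smul_eq_mul, Finset.mul_sum, mul_left_comm r] }
  exact (convex_Ici 0).inter (convex_halfSpace_le hlin 1)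

theorem sVec_mem_Cset (ha : 0 < a) {L Nhi xs : Fin n → ℝ} (hL : ∀ i, 0 < L i)
    (hN : ∀ i, 1 ≤ Nhi i) (hxs : ∀ i, 0 ≤ xs i) (hB : hfun n a xs = 1) :
    sVec n a L xs Nhi ∈ Cset n L Nhi xs := by
  have hX : 0 < Xfun n a xs Nhi := ha.trans_le (le_Xfun hxs hN)
  refine ⟨fun i => div_nonneg ?_ hX.le, le_of_eq ?_⟩
  · exact mul_nonneg (mul_nonneg (zero_le_one.trans (hN i)) (hL i).le) (hxs i)
  · have hterm : ∀ i, alpha n L Nhi xs i * sVec n a L xs Nhi i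
        = xs i * (Nhi i - 1 + ∏ j ∈ univ.erase i, (1 + xs j)) / Xfun n a xs Nhi := fun i => by
      have := (hL i).ne'
      have := (zero_lt_one.trans_le (hN i)).ne'
      simp only [alpha, sVec]
      field_simp
    simp only [hterm, ← Finset.sum_div]
    rw [← Xfun_eq_sum_of_hfun_eq_one (fun i => by linarith [hxs i]) hB, div_self hX.ne']

theorem exists_pos_Xfun_smul_eq (ha : 0 < a) {c N : Fin n → ℝ} {t₁ : ℝ} (ht₁ : 0 ≤ t₁)
    (h : Xfun n a (t₁ • c) N ≤ t₁) : ∃ t, 0 < t ∧ Xfun n a (t • c) N = t := by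
  have hcont : Continuous fun t : ℝ => Xfun n a (t • c) N - t := by
    simp only [Xfun, Pi.smul_apply, smul_eq_mul]
    fun_prop
  have hzero : Xfun n a ((0 : ℝ) • c) N = a := by simp [Xfun]
  obtain ⟨t, ⟨ht0, -⟩, ht⟩ := intermediate_value_Icc' ht₁ hcont.continuousOn
    (show (0 : ℝ) ∈ Set.Icc _ _ from ⟨by linarith, by simp only [hzero, sub_zero]; exact ha.le⟩)
  refine ⟨t, lt_of_le_of_ne ht0 ?_, sub_eq_zero.mp ht⟩
  rintro rfl
  simp only [hzero, sub_zero] at ht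
  exact ha.ne' ht

theorem sVec_smul_of_Xfun_smul_eq {L c N : Fin n → ℝ} {t : ℝ} (ht : t ≠ 0)
    (hX : Xfun n a (t • c) N = t) : sVec n a L (t • c) N = fun i => N i * L i * c i := by
  funext i
  simp only [sVec, hX, Pi.smul_apply, smul_eq_mul]
  field_simp

/-- For `c ≠ 0` the witness puts `t • c` on the tangent hyperplane at `xs` to the level set of
`∏ (1 + yᵢ)`, where the product is at most its value at `xs`. -/
theorem exists_Xfun_smul_le (ha : 0 < a) {xs : Fin n → ℝ} (hxs : ∀ i, 0 ≤ xs i)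
    (hB : hfun n a xs = 1) {c N : Fin n → ℝ} (hc : ∀ i, 0 ≤ c i)
    (hsum : ∑ i, c i * (N i - 1 + ∏ j ∈ univ.erase i, (1 + xs j)) ≤ 1) :
    ∃ t, 0 ≤ t ∧ Xfun n a (t • c) N ≤ t := by
  have hxs1 : ∀ i, 0 < 1 + xs i := fun i => by linarith [hxs i]
  set P : Fin n → ℝ := fun i => ∏ j ∈ univ.erase i, (1 + xs j)
  set Q := ∏ i, (1 + xs i)
  have hP : ∀ i, 0 < P i := fun i => Finset.prod_pos fun j _ => hxs1 j
  have hQ : 1 ≤ Q := Finset.one_le_prod fun k _ => le_add_of_nonneg_right (hxs k)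
  set σ := ∑ i, c i * P i
  rcases (Finset.sum_nonneg fun i _ => mul_nonneg (hc i) (hP i).le : 0 ≤ σ).eq_or_lt with hσ | hσ
  · have hc0 : c = 0 := funext fun i => by
      have := (Finset.sum_eq_zero_iff_of_nonneg fun i _ => mul_nonneg (hc i) (hP i).le).mp
        hσ.symm i (mem_univ i)
      simpa [(hP i).ne'] using this
    exact ⟨a, ha.le, by simp [Xfun, hc0]⟩
  set t := (Q - 1 + a) / σ
  have ht : 0 ≤ t := div_nonneg (by linarith) hσ.le
  have htσ : t * σ = Q - 1 + a := div_mul_cancel₀ _ hσ.ne'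
  have hprod : ∏ i, (1 + t * c i) ≤ Q := by
    refine prod_one_add_le_of_sum_mul_prod_erase_le hxs1
      (fun i => by nlinarith [hc i]) ?_
    rw [sum_mul_prod_erase_eq_of_hfun_eq_one hxs1 hB, ← htσ, Finset.mul_sum]
    exact le_of_eq (Finset.sum_congr rfl fun i _ => by ring)
  refine ⟨t, ht, ?_⟩
  have hlin : ∑ k, (N k - 1) * (t * c k) + t * σ = t * ∑ i, c i * (N i - 1 + P i) := by
    simp only [Finset.mul_sum, σ, ← Finset.sum_add_distrib]
    exact Finset.sum_congr rfl fun i _ => by ring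
  calc Xfun n a (t • c) N = a + ∑ k, (N k - 1) * (t * c k) + ∏ i, (1 + t * c i) - 1 := rfl
    _ ≤ t * ∑ i, c i * (N i - 1 + P i) := by linarith
    _ ≤ t := mul_le_of_le_one_right ht hsum

theorem Cset_subset_rateRegion (ha : 0 < a) {L Nlo Nhi xs : Fin n → ℝ} (hL : ∀ i, 0 < L i)
    (hN : ∀ i, 0 < Nhi i) (hNlo : ∀ i, Nlo i ≤ Nhi i) (hxs : ∀ i, 0 ≤ xs i)
    (hB : hfun n a xs = 1) : Cset n L Nhi xs ⊆ rateRegion n a L Nlo Nhi := by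
  rintro s ⟨hs0, hsum⟩
  set c : Fin n → ℝ := fun i => s i / (L i * Nhi i)
  have hc : ∀ i, 0 ≤ c i := fun i => div_nonneg (hs0 i) (mul_pos (hL i) (hN i)).le
  have hcsum : ∑ i, c i * (Nhi i - 1 + ∏ j ∈ univ.erase i, (1 + xs j)) ≤ 1 := by
    convert hsum using 2 with i
    simp only [c, alpha]
    ring
  obtain ⟨t₁, ht₁, hX₁⟩ := exists_Xfun_smul_le ha hxs hB hc hcsum
  obtain ⟨t, ht, hX⟩ := exists_pos_Xfun_smul_eq ha ht₁ hX₁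
  refine ⟨t • c, Nhi, fun i => mul_nonneg ht.le (hc i), fun i => ⟨hNlo i, le_rfl⟩, ?_⟩
  rw [sVec_smul_of_Xfun_smul_eq ht.ne' hX]
  funext i
  have := (hL i).ne'
  have := (hN i).ne'
  simp only [c]
  field_simp

end RateRegion

theorem stmt0_general (n : ℕ) (a : ℝ) (ha0 : 0 < a)
    (L Nlo Nhi : Fin n → ℝ) (hL : ∀ i, 0 < L i)
    (hNlo : ∀ i, 1 ≤ Nlo i) (hNhi : ∀ i, Nlo i ≤ Nhi i)
    (xs : Fin n → ℝ) (hxs : ∀ i, 0 ≤ xs i) (hB : hfun n a xs = 1) :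
    Convex ℝ (Cset n L Nhi xs) ∧
    Cset n L Nhi xs ⊆ rateRegion n a L Nlo Nhi ∧
    sVec n a L xs Nhi ∈ Cset n L Nhi xs := by
  have hN : ∀ i, 1 ≤ Nhi i := fun i => (hNlo i).trans (hNhi i)
  exact ⟨convex_Cset L Nhi xs,
    Cset_subset_rateRegion ha0 hL (fun i => zero_lt_one.trans_le (hN i)) hNhi hxs hB,
    sVec_mem_Cset ha0 hL hN hxs hB⟩

theorem stmt0 (n : ℕ) (hn : 2 ≤ n) (a : ℝ) (ha0 : 0 < a) (ha1 : a < 1)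
    (L Nlo Nhi : Fin n → ℝ) (hL : ∀ i, 0 < L i)
    (hNlo : ∀ i, 1 ≤ Nlo i) (hNhi : ∀ i, Nlo i ≤ Nhi i)
    (xs : Fin n → ℝ) (hxs : ∀ i, 0 ≤ xs i) (hB : hfun n a xs = 1) :
    Convex ℝ (Cset n L Nhi xs) ∧
    Cset n L Nhi xs ⊆ rateRegion n a L Nlo Nhi ∧
    sVec n a L xs Nhi ∈ Cset n L Nhi xs :=
  stmt0_general n a ha0 L Nlo Nhi hL hNlo hNhi xs hxs hB
end

section
/- (Strict support of the tangent hyperplane.) Let x* ∈ B with x*_i > 0 for all i, and let y* ∈ B with s(y*, N̄) ≠ s(x*, N̄). Then ∑_{i=1}^n b_i(x*) s_i(y*, N̄) > 1/∏_{j=1}^n (1 + x*_j), where b_i(x) = (1/(L_i N̄_i)) ((N̄_i − 1)/∏_{j=1}^n (1 + x_j) + 1/(1 + x_i)). -/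
open Finset

noncomputable def bvec (n : ℕ) (L Nhi x : Fin n → ℝ) (i : Fin n) : ℝ :=
  (1 / (L i * Nhi i)) * ((Nhi i - 1) / (∏ j, (1 + x j)) + 1 / (1 + x i))

/-!
In the coordinates `q i = x i / (1 + x i)` (so `1 - q i = 1 / (1 + x i)`), `h x = 1` reads
`1 - ∑ q = (1 - a) ∏ (1 - q i)`, i.e. `B` is the level set `logSlack q = log (1 - a)` of
`logSlack q = log (1 - ∑ q) - ∑ log (1 - q i)`. Once the factors `L i N̄ i` and the common
denominator `X (y*, N̄)` are cleared, the claimed inequality says that the derivative of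
`logSlack` at `q (y*)` in the direction `q (x*) - q (y*)` is negative.

Along a segment, every critical point of `logSlack` has positive second derivative: there the
second derivative is `∑ e i ^ 2 - (∑ e i) ^ 2` for a nonzero `e` with
`∑ e i ρ i = (∑ ρ) (∑ e)`, which is positive by a weighted variance argument as soon as no
coordinate `ρ i` carries all of `∑ ρ`; on `B` this holds, since a point of `B` with a single
nonzero coordinate forces `a = 0`. A function on `[0, 1]` with equal values at the endpoints
whose critical points all have positive second derivative must start out strictly decreasing.
-/

open Set Filter Topology

section OneDim

lemma HasDerivAt.eventually_lt_nhdsGT {f : ℝ → ℝ} {f' x : ℝ} (hf : HasDerivAt f f' x)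
    (hf' : 0 < f') : ∀ᶠ y in 𝓝[>] x, f x < f y := by
  have hslope := (hasDerivAt_iff_tendsto_slope.mp hf).mono_left (nhdsGT_le_nhdsNE x)
  filter_upwards [hslope.eventually (eventually_gt_nhds hf'), self_mem_nhdsWithin] with y hy hxy
  rw [slope_def_field, lt_div_iff₀ (sub_pos.mpr hxy), zero_mul, sub_pos] at hy
  exact hy

variable {g g' g'' : ℝ → ℝ} {a b : ℝ}

lemma exists_lt_right_of_deriv_nonneg (hg : ∀ t ∈ Icc a b, HasDerivAt g (g' t) t)
    (hg' : ∀ t ∈ Icc a b, HasDerivAt g' (g'' t) t) (hcrit : ∀ t ∈ Icc a b, g' t = 0 → 0 < g'' t)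
    {τ : ℝ} (hτ : τ ∈ Ico a b) (hτ' : 0 ≤ g' τ) : ∃ t ∈ Ioc τ b, g τ < g t := by
  have hτI : τ ∈ Icc a b := Ico_subset_Icc_self hτ
  have hpos : ∀ᶠ t in 𝓝[>] τ, 0 < g' t := by
    rcases hτ'.lt_or_eq with h | h
    · exact nhdsWithin_le_nhds ((hg' τ hτI).continuousAt.eventually (lt_mem_nhds h))
    · simpa [← h] using (hg' τ hτI).eventually_lt_nhdsGT (hcrit τ hτI h.symm)
  obtain ⟨u, hτu, hu⟩ :=
    (nhdsGT_basis τ).eventually_iff.mp (hpos.and (Ioo_mem_nhdsGT hτ.2))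
  have ht : (τ + u) / 2 ∈ Ioo τ u := ⟨by linarith, by linarith⟩
  obtain ⟨c, hc, hslope⟩ := exists_hasDerivAt_eq_slope g g' ht.1
    (fun s hs =>
      (hg s ⟨hτ.1.trans hs.1, hs.2.trans (hu ht).2.2.le⟩).continuousAt.continuousWithinAt)
    (fun s hs => hg s ⟨hτ.1.trans hs.1.le, hs.2.le.trans (hu ht).2.2.le⟩)
  have hgc : 0 < g' c := (hu ⟨hc.1, hc.2.trans ht.2⟩).1
  rw [hslope, div_pos_iff_of_pos_right (sub_pos.mpr ht.1), sub_pos] at hgc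
  exact ⟨_, ⟨ht.1, (hu ht).2.2.le⟩, hgc⟩

lemma deriv_neg_at_left_of_eq_of_second_deriv_pos (hab : a < b)
    (hg : ∀ t ∈ Icc a b, HasDerivAt g (g' t) t) (hg' : ∀ t ∈ Icc a b, HasDerivAt g' (g'' t) t)
    (hcrit : ∀ t ∈ Icc a b, g' t = 0 → 0 < g'' t) (hgab : g a = g b) : g' a < 0 := by
  by_contra! h₀
  obtain ⟨t₀, ht₀, hgt₀⟩ := exists_lt_right_of_deriv_nonneg hg hg' hcrit ⟨le_rfl, hab⟩ h₀
  obtain ⟨μ, hμ, hmax⟩ := isCompact_Icc.exists_isMaxOn (nonempty_Icc.mpr hab.le)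
    fun t ht => (hg t ht).continuousAt.continuousWithinAt
  have hlt : g a < g μ := hgt₀.trans_le (hmax ⟨ht₀.1.le, ht₀.2⟩)
  have hμa : a < μ := hμ.1.lt_of_ne (by rintro rfl; exact hlt.false)
  have hμb : μ < b := hμ.2.lt_of_ne (by rintro rfl; exact (hgab ▸ hlt).false)
  have hcritμ : g' μ = 0 := (hmax.isLocalMax (Icc_mem_nhds hμa hμb)).hasDerivAt_eq_zero (hg μ hμ)
  obtain ⟨t, ht, hgt⟩ := exists_lt_right_of_deriv_nonneg hg hg' hcrit ⟨hμ.1, hμb⟩ hcritμ.ge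
  exact (hmax ⟨hμ.1.trans ht.1.le, ht.2⟩).not_gt hgt

end OneDim

lemma sq_sum_lt_sum_sq_of_sum_mul_eq {ι : Type*} [Fintype ι] {ρ e : ι → ℝ} (hρ : ∀ i, 0 ≤ ρ i)
    (hρ_lt : ∀ i, ρ i < ∑ j, ρ j) (he : e ≠ 0)
    (hmean : ∑ i, e i * ρ i = (∑ i, ρ i) * ∑ i, e i) :
    (∑ i, e i) ^ 2 < ∑ i, e i ^ 2 := by
  set σ := ∑ i, ρ i
  set E := ∑ i, e i
  obtain ⟨i₀, hi₀⟩ : ∃ i, e i ≠ 0 := by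
    by_contra! h
    exact he (funext h)
  have hσ : 0 < σ := (hρ i₀).trans_lt (hρ_lt i₀)
  -- `σ E² ≤ ∑ ρ i e i²` by the variance identity below, and `∑ ρ i e i² < σ ∑ e i²` as `ρ i < σ`.
  have hvar : σ * E ^ 2 + ∑ i, ρ i * (e i - E) ^ 2 = ∑ i, ρ i * e i ^ 2 := by
    have hexp : ∀ i, ρ i * (e i - E) ^ 2 = ρ i * e i ^ 2 - 2 * E * (e i * ρ i) + E ^ 2 * ρ i :=
      fun i => by ring
    simp only [hexp, sum_add_distrib, sum_sub_distrib, ← mul_sum, hmean]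
    ring
  have hweighted : ∑ i, ρ i * e i ^ 2 < σ * ∑ i, e i ^ 2 := by
    rw [mul_sum, ← sub_pos, ← sum_sub_distrib]
    refine sum_pos' (fun i _ => ?_) ⟨i₀, mem_univ _, ?_⟩
    · nlinarith [hρ_lt i, sq_nonneg (e i)]
    · nlinarith [hρ_lt i₀, pow_pos (sq_pos_of_ne_zero hi₀) 1]
  have hdev : 0 ≤ ∑ i, ρ i * (e i - E) ^ 2 := sum_nonneg fun i _ => mul_nonneg (hρ i) (sq_nonneg _)
  exact lt_of_mul_lt_mul_left (by linarith) hσ.le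

section LogSlack

variable {ι : Type*}

lemma hasDerivAt_add_smul_apply {p d : ι → ℝ} {t : ℝ} (i : ι) :
    HasDerivAt (fun s : ℝ => (p + s • d) i) (d i) t := by
  simpa [Pi.add_apply, Pi.smul_apply] using ((hasDerivAt_id t).mul_const (d i)).const_add (p i)

variable [Fintype ι]

structure SpreadInSimplex (ρ : ι → ℝ) : Prop where
  nonneg : ∀ i, 0 ≤ ρ i
  sum_lt_one : ∑ i, ρ i < 1
  lt_sum : ∀ i, ρ i < ∑ j, ρ j

noncomputable def logSlack (ρ : ι → ℝ) : ℝ :=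
  Real.log (1 - ∑ i, ρ i) - ∑ i, Real.log (1 - ρ i)

noncomputable def logSlackDeriv (ρ d : ι → ℝ) : ℝ :=
  ∑ i, d i / (1 - ρ i) - (∑ i, d i) / (1 - ∑ i, ρ i)

noncomputable def logSlackDeriv2 (ρ d : ι → ℝ) : ℝ :=
  ∑ i, (d i / (1 - ρ i)) ^ 2 - ((∑ i, d i) / (1 - ∑ i, ρ i)) ^ 2

namespace SpreadInSimplex

variable {ρ p q : ι → ℝ}

lemma one_sub_sum_pos (hρ : SpreadInSimplex ρ) : 0 < 1 - ∑ i, ρ i :=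
  sub_pos.mpr hρ.sum_lt_one

lemma one_sub_pos (hρ : SpreadInSimplex ρ) (i : ι) : 0 < 1 - ρ i :=
  sub_pos.mpr ((hρ.lt_sum i).trans hρ.sum_lt_one)

lemma add_smul_sub (hp : SpreadInSimplex p) (hq : SpreadInSimplex q) {t : ℝ}
    (ht : t ∈ Set.Icc 0 1) : SpreadInSimplex (p + t • (q - p)) := by
  have hcoord : ∀ i, (p + t • (q - p)) i = (1 - t) • p i + t • q i := fun i => by
    simp only [Pi.add_apply, Pi.smul_apply, Pi.sub_apply, smul_eq_mul]
    ring
  have hsum : ∑ i, (p + t • (q - p)) i = (1 - t) • ∑ i, p i + t • ∑ i, q i := by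
    simp only [hcoord, sum_add_distrib, ← smul_sum]
  have h1t : 0 ≤ 1 - t := sub_nonneg.mpr ht.2
  have hcomb : (1 - t) + t = 1 := sub_add_cancel 1 t
  refine ⟨fun i => ?_, ?_, fun i => ?_⟩
  · rw [hcoord]
    exact convex_Ici (0 : ℝ) (hp.nonneg i) (hq.nonneg i) h1t ht.1 hcomb
  · rw [hsum]
    exact convex_Iio (1 : ℝ) hp.sum_lt_one hq.sum_lt_one h1t ht.1 hcomb
  · have := convex_Ioi (0 : ℝ) (sub_pos.mpr (hp.lt_sum i)) (sub_pos.mpr (hq.lt_sum i))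
      h1t ht.1 hcomb
    rw [hcoord, hsum, ← sub_pos]
    simpa only [smul_eq_mul, Set.mem_Ioi, mul_sub] using this.trans_eq (by ring)

end SpreadInSimplex

section Derivatives

variable {p d : ι → ℝ} {t : ℝ}

lemma hasDerivAt_sum_add_smul :
    HasDerivAt (fun s : ℝ => ∑ i, (p + s • d) i) (∑ i, d i) t :=
  HasDerivAt.fun_sum fun i _ => hasDerivAt_add_smul_apply i

lemma hasDerivAt_logSlack_add_smul (hρ : SpreadInSimplex (p + t • d)) :
    HasDerivAt (fun s : ℝ => logSlack (p + s • d)) (logSlackDeriv (p + t • d) d) t := by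
  have hsum := (hasDerivAt_sum_add_smul.const_sub 1).log hρ.one_sub_sum_pos.ne'
  have hcoord := HasDerivAt.fun_sum fun i (_ : i ∈ Finset.univ) =>
    ((hasDerivAt_add_smul_apply (p := p) (d := d) (t := t) i).const_sub 1).log
      (hρ.one_sub_pos i).ne'
  refine (hsum.fun_sub hcoord).congr_deriv ?_
  simp only [logSlackDeriv, neg_div, sum_neg_distrib]
  ring

lemma hasDerivAt_logSlackDeriv_add_smul (hρ : SpreadInSimplex (p + t • d)) :
    HasDerivAt (fun s : ℝ => logSlackDeriv (p + s • d) d) (logSlackDeriv2 (p + t • d) d) t := by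
  have hsum := (hasDerivAt_const t (∑ i, d i)).fun_div (hasDerivAt_sum_add_smul.const_sub 1)
    hρ.one_sub_sum_pos.ne'
  have hcoord := HasDerivAt.fun_sum fun i (_ : i ∈ Finset.univ) =>
    (hasDerivAt_const t (d i)).fun_div
      ((hasDerivAt_add_smul_apply (p := p) (d := d) (t := t) i).const_sub 1) (hρ.one_sub_pos i).ne'
  refine (hcoord.fun_sub hsum).congr_deriv ?_
  simp only [logSlackDeriv2, div_pow]
  congr 1
  · exact sum_congr rfl fun i _ => by ring
  · ring

end Derivatives

lemma SpreadInSimplex.logSlackDeriv2_pos {ρ d : ι → ℝ} (hρ : SpreadInSimplex ρ) (hd : d ≠ 0)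
    (hcrit : logSlackDeriv ρ d = 0) : 0 < logSlackDeriv2 ρ d := by
  set e : ι → ℝ := fun i => d i / (1 - ρ i)
  have hde : ∀ i, e i * (1 - ρ i) = d i := fun i => div_mul_cancel₀ _ (hρ.one_sub_pos i).ne'
  have hE : ∑ i, e i = (∑ i, d i) / (1 - ∑ i, ρ i) := sub_eq_zero.mp hcrit
  have he : e ≠ 0 := fun he => hd (funext fun i => by rw [← hde i, he, Pi.zero_apply, zero_mul])
  have hmean : ∑ i, e i * ρ i = (∑ i, ρ i) * ∑ i, e i := by
    have hsum_d : ∑ i, d i = (1 - ∑ i, ρ i) * ∑ i, e i := by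
      rw [hE, mul_div_cancel₀ _ hρ.one_sub_sum_pos.ne']
    have : ∑ i, e i * ρ i = ∑ i, e i - ∑ i, d i := by
      simp only [← hde, ← sum_sub_distrib]
      exact sum_congr rfl fun i _ => by ring
    rw [this, hsum_d]
    ring
  have := sq_sum_lt_sum_sq_of_sum_mul_eq hρ.nonneg hρ.lt_sum he hmean
  rw [logSlackDeriv2, ← hE]
  linarith

theorem SpreadInSimplex.logSlackDeriv_neg {p q : ι → ℝ} (hp : SpreadInSimplex p)
    (hq : SpreadInSimplex q) (hpq : p ≠ q) (heq : logSlack p = logSlack q) :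
    logSlackDeriv p (q - p) < 0 := by
  have hseg : ∀ t ∈ Set.Icc (0 : ℝ) 1, SpreadInSimplex (p + t • (q - p)) :=
    fun t ht => hp.add_smul_sub hq ht
  simpa using deriv_neg_at_left_of_eq_of_second_deriv_pos zero_lt_one
    (fun t ht => hasDerivAt_logSlack_add_smul (hseg t ht))
    (fun t ht => hasDerivAt_logSlackDeriv_add_smul (hseg t ht))
    (fun t ht => (hseg t ht).logSlackDeriv2_pos (sub_ne_zero.mpr hpq.symm))
    (by simpa using heq)

end LogSlack

lemma one_le_prod_one_add {ι : Type*} [Fintype ι] {x : ι → ℝ} (hx : ∀ i, 0 ≤ x i) :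
    1 ≤ ∏ j, (1 + x j) :=
  Finset.one_le_prod fun j _ => by linarith [hx j]

lemma prod_one_add_pos {ι : Type*} [Fintype ι] {x : ι → ℝ} (hx : ∀ i, 0 ≤ x i) :
    0 < ∏ j, (1 + x j) :=
  zero_lt_one.trans_le (one_le_prod_one_add hx)

lemma one_add_le_prod_one_add {ι : Type*} [Fintype ι] [DecidableEq ι] {x : ι → ℝ}
    (hx : ∀ i, 0 ≤ x i) (i : ι) : 1 + x i ≤ ∏ j, (1 + x j) := by
  rw [← Finset.mul_prod_erase _ _ (mem_univ i)]
  exact le_mul_of_one_le_right (by linarith [hx i])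
    (Finset.one_le_prod fun j _ => by linarith [hx j])

noncomputable def toSimplex {ι : Type*} (x : ι → ℝ) : ι → ℝ := fun i => x i / (1 + x i)

lemma one_sub_toSimplex {ι : Type*} {x : ι → ℝ} (hx : ∀ i, 0 ≤ x i) (i : ι) :
    1 - toSimplex x i = (1 + x i)⁻¹ := by
  have : 1 + x i ≠ 0 := by linarith [hx i]
  simp only [toSimplex]
  field_simp
  ring

section Boundary

variable {n : ℕ} {a : ℝ} {x y : Fin n → ℝ}

lemma sum_toSimplex_of_hfun_eq_one (hxB : hfun n a x = 1) :
    ∑ i, toSimplex x i = 1 - (1 - a) / ∏ j, (1 + x j) := by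
  rw [hfun] at hxB
  simp only [toSimplex]
  linarith

lemma spreadInSimplex_toSimplex (ha0 : 0 < a) (ha1 : a < 1) (hx : ∀ i, 0 ≤ x i)
    (hxB : hfun n a x = 1) : SpreadInSimplex (toSimplex x) := by
  have hP : 0 < ∏ j, (1 + x j) := prod_one_add_pos hx
  have hsum := sum_toSimplex_of_hfun_eq_one hxB
  refine ⟨fun i => div_nonneg (hx i) (by linarith [hx i]), ?_, fun i => ?_⟩
  · rw [hsum, sub_lt_self_iff]
    exact div_pos (by linarith) hP
  · have h1x : 0 < 1 + x i := by linarith [hx i]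
    rw [hsum, ← sub_lt_sub_iff_left 1, one_sub_toSimplex hx, sub_sub_cancel,
      div_lt_iff₀ hP, inv_mul_eq_div, lt_div_iff₀ h1x]
    nlinarith [one_add_le_prod_one_add hx i]

lemma logSlack_toSimplex (ha1 : a < 1) (hx : ∀ i, 0 ≤ x i) (hxB : hfun n a x = 1) :
    logSlack (toSimplex x) = Real.log (1 - a) := by
  have h1x : ∀ j, 0 < 1 + x j := fun j => by linarith [hx j]
  have hP : 0 < ∏ j, (1 + x j) := prod_one_add_pos hx
  rw [logSlack, sum_toSimplex_of_hfun_eq_one hxB, sub_sub_cancel, Real.log_div (by linarith) hP.ne',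
    Real.log_prod fun j _ => (h1x j).ne']
  simp only [one_sub_toSimplex hx, Real.log_inv, sum_neg_distrib]
  ring

lemma logSlackDeriv_toSimplex (ha1 : a < 1) (hx : ∀ i, 0 ≤ x i) (hy : ∀ i, 0 ≤ y i)
    (hxB : hfun n a x = 1) (hyB : hfun n a y = 1) :
    logSlackDeriv (toSimplex y) (toSimplex x - toSimplex y) =
      (∏ j, (1 + y j) - (1 - a)) / ∏ j, (1 + x j) - ∑ i, y i / (1 + x i) := by
  have hP : 0 < ∏ j, (1 + x j) := prod_one_add_pos hx
  have hQ : 0 < ∏ j, (1 + y j) := prod_one_add_pos hy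
  have hcoord : ∀ i, (toSimplex x - toSimplex y) i / (1 - toSimplex y i) =
      toSimplex x i - y i / (1 + x i) := fun i => by
    have : 0 < 1 + x i := by linarith [hx i]
    have : 0 < 1 + y i := by linarith [hy i]
    rw [one_sub_toSimplex hy]
    simp only [Pi.sub_apply, toSimplex]
    field_simp
    ring
  rw [logSlackDeriv, sum_congr rfl fun i _ => hcoord i]
  simp only [sum_sub_distrib, Pi.sub_apply, sum_toSimplex_of_hfun_eq_one hxB,
    sum_toSimplex_of_hfun_eq_one hyB, sub_sub_cancel]
  have : 1 - a ≠ 0 := by linarith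
  field_simp
  ring

theorem prod_sub_lt_sum_mul_prod_of_hfun_eq_one (ha0 : 0 < a) (ha1 : a < 1)
    (hx : ∀ i, 0 ≤ x i) (hy : ∀ i, 0 ≤ y i) (hxB : hfun n a x = 1) (hyB : hfun n a y = 1)
    (hxy : x ≠ y) :
    ∏ j, (1 + y j) - (1 - a) < (∑ i, y i / (1 + x i)) * ∏ j, (1 + x j) := by
  have hne : toSimplex y ≠ toSimplex x := fun h => hxy <| funext fun i => by
    have := congrArg (1 - · i) h
    simp only [one_sub_toSimplex hx, one_sub_toSimplex hy, inv_inj, add_right_inj] at this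
    exact this.symm
  have hslope := (spreadInSimplex_toSimplex ha0 ha1 hy hyB).logSlackDeriv_neg
    (spreadInSimplex_toSimplex ha0 ha1 hx hxB) hne
    (by rw [logSlack_toSimplex ha1 hy hyB, logSlack_toSimplex ha1 hx hxB])
  rwa [logSlackDeriv_toSimplex ha1 hx hy hxB hyB, sub_neg,
    div_lt_iff₀ (prod_one_add_pos hx)] at hslope

end Boundary

lemma one_div_prod_lt_sum_bvec_mul_sVec {n : ℕ} {a : ℝ} {L N x y : Fin n → ℝ} (ha : 0 < a)
    (hL : ∀ i, 0 < L i) (hN : ∀ i, 1 ≤ N i) (hx : ∀ i, 0 ≤ x i) (hy : ∀ i, 0 ≤ y i)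
    (h : ∏ j, (1 + y j) - (1 - a) < (∑ i, y i / (1 + x i)) * ∏ j, (1 + x j)) :
    1 / ∏ j, (1 + x j) < ∑ i, bvec n L N x i * sVec n a L y N i := by
  have hP : 0 < ∏ j, (1 + x j) := prod_one_add_pos hx
  have hS : 0 ≤ ∑ k, (N k - 1) * y k :=
    sum_nonneg fun k _ => mul_nonneg (by linarith [hN k]) (hy k)
  have hX : 0 < Xfun n a y N := by
    have := one_le_prod_one_add hy
    rw [Xfun]
    linarith
  have hterm : ∀ i, bvec n L N x i * sVec n a L y N i =
      ((N i - 1) * y i / ∏ j, (1 + x j) + y i / (1 + x i)) / Xfun n a y N := fun i => by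
    have : L i ≠ 0 := (hL i).ne'
    have : N i ≠ 0 := (zero_lt_one.trans_le (hN i)).ne'
    have : 1 + x i ≠ 0 := by linarith [hx i]
    simp only [bvec, sVec]
    field_simp
  rw [sum_congr rfl fun i _ => hterm i, ← sum_div, sum_add_distrib, ← sum_div,
    div_lt_div_iff₀ hP hX, one_mul, add_mul, div_mul_cancel₀ _ hP.ne', Xfun]
  linarith

theorem stmt4_general (n : ℕ) (a : ℝ) (ha0 : 0 < a) (ha1 : a < 1)
    (L Nlo Nhi : Fin n → ℝ) (hL : ∀ i, 0 < L i)
    (hNlo : ∀ i, 1 ≤ Nlo i) (hNhi : ∀ i, Nlo i ≤ Nhi i)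
    (xs : Fin n → ℝ) (hxs : ∀ i, 0 < xs i) (hxB : hfun n a xs = 1)
    (ys : Fin n → ℝ) (hys : ∀ i, 0 ≤ ys i) (hyB : hfun n a ys = 1)
    (hne : sVec n a L ys Nhi ≠ sVec n a L xs Nhi) :
    ∑ i, bvec n L Nhi xs i * sVec n a L ys Nhi i > 1 / ∏ j, (1 + xs j) := by
  have hx : ∀ i, 0 ≤ xs i := fun i => (hxs i).le
  have hxy : xs ≠ ys := by
    rintro rfl
    exact hne rfl
  exact one_div_prod_lt_sum_bvec_mul_sVec ha0 hL (fun i => (hNlo i).trans (hNhi i)) hx hys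
    (prod_sub_lt_sum_mul_prod_of_hfun_eq_one ha0 ha1 hx hys hxB hyB hxy)

theorem stmt4 (n : ℕ) (hn : 2 ≤ n) (a : ℝ) (ha0 : 0 < a) (ha1 : a < 1)
    (L Nlo Nhi : Fin n → ℝ) (hL : ∀ i, 0 < L i)
    (hNlo : ∀ i, 1 ≤ Nlo i) (hNhi : ∀ i, Nlo i ≤ Nhi i)
    (xs : Fin n → ℝ) (hxs : ∀ i, 0 < xs i) (hxB : hfun n a xs = 1)
    (ys : Fin n → ℝ) (hys : ∀ i, 0 ≤ ys i) (hyB : hfun n a ys = 1)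
    (hne : sVec n a L ys Nhi ≠ sVec n a L xs Nhi) :
    ∑ i, bvec n L Nhi xs i * sVec n a L ys Nhi i > 1 / ∏ j, (1 + xs j) :=
  stmt4_general n a ha0 ha1 L Nlo Nhi hL hNlo hNhi xs hxs hxB ys hys hyB hne
end

section
/- (Local strict support inequality.) Let x* ∈ B with x*_i > 0 for all i. Then there exists ε > 0 such that for every y ∈ B with 0 < ‖y − x*‖ < ε, one has ∏_{j=1}^n (1 + x*_j) · (1 + ∑_{i=1}^n (y_i − x*_i)/(1 + x*_i)) > ∏_{j=1}^n (1 + y_j). -/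
/-!
In the coordinates `t i = (y i - x* i) / (1 + x* i)` one has
`∏ (1 + y j) = ∏ (1 + x* j) * ∏ (1 + t j)`, so the claim is `∏ (1 + t i) < 1 + ∑ t i` for small
`t ≠ 0` satisfying the constraint. By the second-order expansion of the product it suffices that
`(∑ t i)² ≤ κ ∑ t i² + O(|t|³)` for some `κ < 1`.

With `v i = (1 + x* i)⁻¹` and `Q = (1 - a) / ∏ (1 + x* j)`, the constraint `h = 1` reads
`∑ v i / (1 + t i) = n - 1 + Q / ∏ (1 + t i)`; linearised, it says that `t` is orthogonal to the
positive vector `v - Q` up to `O(|t|²)`. Split `1 = w + c (v - Q)` with `c = (1 - Q)⁻¹` and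
`w i = c (1 - v i)`: the weights `w i` lie in `(0, 1)` and sum to `1`, so `κ = ∑ w i² < 1`, and
Cauchy–Schwarz applied to `∑ t i = ∑ w i t i + c ∑ (v i - Q) t i` gives the required bound.
-/

open Finset

open Filter Topology

variable {ι : Type*}

theorem sum_sq_le_sq_sum_abs (s : Finset ι) (t : ι → ℝ) :
    ∑ i ∈ s, t i ^ 2 ≤ (∑ i ∈ s, |t i|) ^ 2 := by
  simpa only [sq_abs] using sum_sq_le_sq_sum_of_nonneg (s := s) fun i _ => abs_nonneg (t i)

theorem sq_sum_le_sq_sum_abs (s : Finset ι) (t : ι → ℝ) :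
    (∑ i ∈ s, t i) ^ 2 ≤ (∑ i ∈ s, |t i|) ^ 2 :=
  sq_le_sq.2 <| (abs_sum_le_sum_abs t s).trans (le_abs_self _)

theorem abs_prod_one_add_sub_taylor_le (s : Finset ι) (t : ι → ℝ)
    (h : ∑ i ∈ s, |t i| ≤ 1) :
    |∏ i ∈ s, (1 + t i) - 1 - ∑ i ∈ s, t i -
        ((∑ i ∈ s, t i) ^ 2 - ∑ i ∈ s, t i ^ 2) / 2| ≤ (∑ i ∈ s, |t i|) ^ 3 := by
  classical
  induction s using Finset.induction_on with
  | empty => simp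
  | insert a s ha ih =>
    rw [sum_insert ha] at h
    rw [prod_insert ha, sum_insert ha, sum_insert ha, sum_insert ha]
    set σ := ∑ i ∈ s, t i
    set ρ := ∑ i ∈ s, t i ^ 2
    set S := ∑ i ∈ s, |t i|
    set P := ∏ i ∈ s, (1 + t i)
    have hτ : 0 ≤ |t a| := abs_nonneg _
    have hS0 : 0 ≤ S := sum_nonneg fun i _ => abs_nonneg _
    have hS1 : S ≤ 1 := by linarith
    have hquad : |(σ ^ 2 - ρ) / 2| ≤ S ^ 2 / 2 := by
      rw [abs_div, abs_two]
      gcongr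
      exact abs_sub_le_of_nonneg_of_le (sq_nonneg σ) (sq_sum_le_sq_sum_abs s t)
        (sum_nonneg fun i _ => sq_nonneg _) (sum_sq_le_sq_sum_abs s t)
    have hrec : |(P - 1 - σ - (σ ^ 2 - ρ) / 2) * (1 + t a)| ≤ S ^ 3 * (1 + |t a|) := by
      rw [abs_mul]
      exact mul_le_mul (ih hS1) ((abs_add_le _ _).trans (by simp)) (abs_nonneg _) (by positivity)
    calc |(1 + t a) * P - 1 - (t a + σ) - ((t a + σ) ^ 2 - (t a ^ 2 + ρ)) / 2|
        = |(P - 1 - σ - (σ ^ 2 - ρ) / 2) * (1 + t a) + t a * ((σ ^ 2 - ρ) / 2)| := by ring_nf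
      _ ≤ S ^ 3 * (1 + |t a|) + |t a| * (S ^ 2 / 2) := by
        refine (abs_add_le _ _).trans (add_le_add hrec ?_)
        rw [abs_mul]
        exact mul_le_mul_of_nonneg_left hquad hτ
      _ ≤ (|t a| + S) ^ 3 := by
        nlinarith [mul_nonneg hS0 (sq_nonneg (t a)), pow_nonneg hτ 3,
          mul_nonneg (mul_nonneg hτ hτ) hS0, mul_nonneg (mul_nonneg hτ hS0) hS0,
          mul_le_mul_of_nonneg_left (pow_le_pow_of_le_one hS0 hS1 (by norm_num : 2 ≤ 3)) hτ]

theorem abs_prod_one_add_sub_one_sub_sum_le (s : Finset ι) (t : ι → ℝ)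
    (h : ∑ i ∈ s, |t i| ≤ 1 / 2) :
    |∏ i ∈ s, (1 + t i) - 1 - ∑ i ∈ s, t i| ≤ (∑ i ∈ s, |t i|) ^ 2 := by
  have hT := abs_prod_one_add_sub_taylor_le s t (by linarith)
  have hσ := sq_sum_le_sq_sum_abs s t
  have hρ := sum_sq_le_sq_sum_abs s t
  have hρ0 : 0 ≤ ∑ i ∈ s, t i ^ 2 := sum_nonneg fun i _ => sq_nonneg _
  have hS0 : 0 ≤ ∑ i ∈ s, |t i| := sum_nonneg fun i _ => abs_nonneg _
  rw [abs_le] at hT ⊢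
  constructor <;> nlinarith [sq_nonneg (∑ i ∈ s, t i)]

theorem sq_sum_le_of_add_mul_eq_one [Fintype ι] (w m t : ι → ℝ) (c : ℝ)
    (h : ∀ i, w i + c * m i = 1) :
    (∑ i, t i) ^ 2 ≤
      (∑ i, w i ^ 2) * ∑ i, t i ^ 2 + 2 * |c| * |∑ i, m i * t i| * |∑ i, t i| := by
  set σ := ∑ i, t i
  set A := ∑ i, w i * t i
  set B := c * ∑ i, m i * t i
  have hσ : σ = A + B := by
    simp only [σ, A, B, mul_sum, ← sum_add_distrib]
    exact sum_congr rfl fun i _ => by linear_combination (-t i) * h i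
  have hB : B * σ ≤ |c| * |∑ i, m i * t i| * |σ| := by
    simpa only [B, abs_mul] using le_abs_self (B * σ)
  have hsq : σ ^ 2 = A ^ 2 + 2 * (B * σ) - B ^ 2 := by rw [hσ]; ring
  linarith [sum_mul_sq_le_sq_mul_sq univ w t, sq_nonneg B]

theorem sum_sq_lt_one_of_sum_eq_one [Fintype ι] (w : ι → ℝ) (h0 : ∀ i, 0 < w i)
    (h1 : ∀ i, w i < 1) (hw : ∑ i, w i = 1) : ∑ i, w i ^ 2 < 1 := by
  have hne : (univ : Finset ι).Nonempty := nonempty_of_sum_ne_zero (f := w) (by simp [hw])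
  calc ∑ i, w i ^ 2 < ∑ i, w i :=
        sum_lt_sum_of_nonempty hne fun i _ => by nlinarith [h0 i, h1 i]
    _ = 1 := hw

theorem sum_sub_mul_eq_of_sum_div_one_add_eq [Fintype ι] (v t : ι → ℝ) (N Q R : ℝ)
    (ht : ∀ i, 1 + t i ≠ 0) (hR : R ≠ 0)
    (hv : ∑ i, v i = N + Q) (hvt : ∑ i, v i / (1 + t i) = N + Q / R) :
    ∑ i, (v i - Q) * t i =
      ∑ i, v i * t i ^ 2 / (1 + t i) + Q * (R - 1 - (∑ i, t i) * R) / R := by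
  have hterm : ∀ i, (v i - Q) * t i =
      v i - v i / (1 + t i) + v i * t i ^ 2 / (1 + t i) - Q * t i := fun i => by
    field_simp [ht i]; ring
  simp only [hterm, sum_sub_distrib, sum_add_distrib, ← mul_sum, hv, hvt]
  field_simp
  ring

theorem abs_sum_sub_mul_le_of_sum_div_one_add_eq [Fintype ι] (v t : ι → ℝ) (N Q : ℝ)
    (hQ0 : 0 ≤ Q) (hQ1 : Q ≤ 1) (hv0 : ∀ i, 0 ≤ v i) (hvt : ∀ i, v i ≤ 1 + t i)
    (hs : ∑ i, |t i| ≤ 1 / 2) (hv : ∑ i, v i = N + Q)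
    (hB : ∑ i, v i / (1 + t i) = N + Q / ∏ i, (1 + t i)) :
    |∑ i, (v i - Q) * t i| ≤ 11 * (∑ i, |t i|) ^ 2 := by
  set s := ∑ i, |t i|
  set σ := ∑ i, t i
  set R := ∏ i, (1 + t i)
  have hs0 : 0 ≤ s := sum_nonneg fun i _ => abs_nonneg _
  have ht : ∀ i, 0 < 1 + t i := fun i => by
    have := single_le_sum (fun j _ => abs_nonneg (t j)) (mem_univ i)
    linarith [neg_abs_le (t i)]
  have hD := abs_le.1 (abs_prod_one_add_sub_one_sub_sum_le univ t hs)
  have hσ := abs_le.1 (abs_sum_le_sum_abs t univ : |σ| ≤ s)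
  have hR : 1 / 4 ≤ R := by nlinarith
  set A := ∑ i, v i * t i ^ 2 / (1 + t i)
  have hA0 : 0 ≤ A :=
    sum_nonneg fun i _ => div_nonneg (mul_nonneg (hv0 i) (sq_nonneg _)) (ht i).le
  have hAs : A ≤ s ^ 2 := by
    refine (sum_le_sum fun i _ => ?_).trans (sum_sq_le_sq_sum_abs univ t)
    rw [div_le_iff₀ (ht i)]
    nlinarith [hvt i, sq_nonneg (t i)]
  have hX : |R - 1 - σ * R| ≤ 5 / 2 * s ^ 2 := by
    rw [abs_le]; constructor <;> nlinarith
  rw [sum_sub_mul_eq_of_sum_div_one_add_eq v t N Q R (fun i => (ht i).ne')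
    (by positivity) hv hB]
  have hQX : |Q * (R - 1 - σ * R) / R| ≤ 10 * s ^ 2 := by
    have hR0 : 0 < R := by linarith
    rw [abs_div, abs_mul, abs_of_nonneg hQ0, abs_of_pos hR0, div_le_iff₀ hR0]
    nlinarith [abs_nonneg (R - 1 - σ * R)]
  calc _ ≤ |A| + |Q * (R - 1 - σ * R) / R| := abs_add_le _ _
    _ ≤ 11 * s ^ 2 := by rw [abs_of_nonneg hA0]; linarith

theorem prod_one_add_lt_one_add_sum_of_sum_abs_lt [Fintype ι] (v w t : ι → ℝ) (N Q c : ℝ)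
    (hQ0 : 0 ≤ Q) (hQ1 : Q ≤ 1) (hv0 : ∀ i, 0 ≤ v i) (hwm : ∀ i, w i + c * (v i - Q) = 1)
    (hv : ∑ i, v i = N + Q) (hvt : ∀ i, v i ≤ 1 + t i)
    (hB : ∑ i, v i / (1 + t i) = N + Q / ∏ i, (1 + t i)) (ht0 : t ≠ 0)
    (hs1 : ∑ i, |t i| ≤ 1 / 2)
    (hsK : Fintype.card ι * (11 * |c| + 1) * ∑ i, |t i| < (1 - ∑ i, w i ^ 2) / 2) :
    ∏ i, (1 + t i) < 1 + ∑ i, t i := by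
  have hβ := abs_sum_sub_mul_le_of_sum_div_one_add_eq v t N Q hQ0 hQ1 hv0 hvt hs1 hv hB
  have hCS := sq_sum_le_of_add_mul_eq_one w (fun i => v i - Q) t c hwm
  have hT := (abs_le.1 (abs_prod_one_add_sub_taylor_le univ t (by linarith))).2
  have hσ : |∑ i, t i| ≤ ∑ i, |t i| := abs_sum_le_sum_abs t univ
  have hsρ : (∑ i, |t i|) ^ 2 ≤ Fintype.card ι * ∑ i, t i ^ 2 := by
    simpa only [sq_abs, card_univ] using
      sq_sum_le_card_mul_sum_sq (s := univ) (f := fun i => |t i|)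
  have hρ : 0 < ∑ i, t i ^ 2 := by
    obtain ⟨i, hi⟩ := Function.ne_iff.1 ht0
    exact sum_pos' (fun j _ => sq_nonneg _) ⟨i, mem_univ i, sq_pos_of_ne_zero hi⟩
  set s := ∑ i, |t i|
  set ρ := ∑ i, t i ^ 2
  have hs0 : 0 ≤ s := sum_nonneg fun i _ => abs_nonneg _
  have h1 : 2 * |c| * |∑ i, (v i - Q) * t i| * |∑ i, t i| ≤ 2 * |c| * (11 * s ^ 2) * s := by
    gcongr
  have h2 : (11 * |c| + 1) * s ^ 3 ≤ Fintype.card ι * (11 * |c| + 1) * s * ρ := by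
    have := mul_le_mul_of_nonneg_left hsρ (by positivity : 0 ≤ (11 * |c| + 1) * s)
    linarith
  linarith [mul_lt_mul_of_pos_right hsK hρ]

theorem eventually_prod_one_add_lt_one_add_sum [Fintype ι] (v : ι → ℝ)
    (Q : ℝ) (hQ0 : 0 ≤ Q) (hQ1 : Q < 1) (hQv : ∀ i, Q < v i) (hv1 : ∀ i, v i < 1)
    (hv : ∑ i, v i = Fintype.card ι - 1 + Q) :
    ∀ᶠ t in 𝓝 (0 : ι → ℝ), (∀ i, v i ≤ 1 + t i) →
      ∑ i, v i / (1 + t i) = Fintype.card ι - 1 + Q / ∏ i, (1 + t i) → t ≠ 0 →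
      ∏ i, (1 + t i) < 1 + ∑ i, t i := by
  have hQ1' : 0 < 1 - Q := sub_pos.2 hQ1
  set c := (1 - Q)⁻¹
  set w : ι → ℝ := fun i => c * (1 - v i)
  have hwm : ∀ i, w i + c * (v i - Q) = 1 := fun i => by
    simp only [w, c]; field_simp; ring
  have hw : ∑ i, w i = 1 := by
    simp only [w, ← mul_sum, sum_sub_distrib, sum_const, card_univ, hv, c]
    field_simp; ring
  have hκ : ∑ i, w i ^ 2 < 1 := sum_sq_lt_one_of_sum_eq_one w
    (fun i => mul_pos (inv_pos.2 hQ1') (by linarith [hv1 i]))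
    (fun i => by linarith [hwm i, mul_pos (inv_pos.2 hQ1') (sub_pos.2 (hQv i))]) hw
  have hcard : 0 < (Fintype.card ι : ℝ) := by
    have hne := nonempty_of_sum_ne_zero (s := univ) (f := w) (by rw [hw]; exact one_ne_zero)
    exact_mod_cast card_univ (α := ι) ▸ card_pos.2 hne
  set K : ℝ := Fintype.card ι * (11 * |c| + 1)
  set ε := min (1 / 2) ((1 - ∑ i, w i ^ 2) / (2 * K))
  have hε : 0 < ε := lt_min (by norm_num) (div_pos (by linarith) (by positivity))
  have hsmall : ∀ᶠ t in 𝓝 (0 : ι → ℝ), ∑ i, |t i| < ε := by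
    have : Continuous fun t : ι → ℝ => ∑ i, |t i| := by fun_prop
    simpa using this.tendsto 0 |>.eventually (gt_mem_nhds (by simpa using hε))
  filter_upwards [hsmall] with t hs hvt hB ht0
  refine prod_one_add_lt_one_add_sum_of_sum_abs_lt v w t _ Q c hQ0 hQ1.le
    (fun i => by linarith [hQv i]) hwm hv hvt hB ht0 (hs.le.trans (min_le_left _ _)) ?_
  have := hs.trans_le (min_le_right _ _)
  rw [lt_div_iff₀ (by positivity)] at this
  linarith

theorem one_add_sub_div_one_add {x y : ℝ} (hx : 1 + x ≠ 0) :
    1 + (y - x) / (1 + x) = (1 + y) / (1 + x) := by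
  field_simp; ring

theorem prod_one_add_eq_mul_prod_one_add_sub_div [Fintype ι] {x : ι → ℝ} (y : ι → ℝ)
    (hx : ∀ i, 1 + x i ≠ 0) :
    ∏ i, (1 + y i) = (∏ i, (1 + x i)) * ∏ i, (1 + (y i - x i) / (1 + x i)) := by
  simp only [one_add_sub_div_one_add (hx _), prod_div_distrib]
  field_simp [prod_ne_zero_iff.2 fun i _ => hx i]

theorem div_prod_one_add_lt_inv_one_add [Fintype ι] {x : ι → ℝ} (hx : ∀ i, 0 ≤ x i) {b : ℝ}
    (hb : b < 1) (i : ι) : b / ∏ j, (1 + x j) < (1 + x i)⁻¹ := by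
  have hxi : 0 < 1 + x i := by linarith [hx i]
  have hP : 1 + x i ≤ ∏ j, (1 + x j) := by
    simpa using prod_le_prod_of_subset_of_one_le (f := fun j => 1 + x j) (subset_univ {i})
      (by simpa using hxi.le) fun j _ _ => by linarith [hx j]
  rw [div_lt_iff₀ (by linarith), ← div_eq_inv_mul, lt_div_iff₀ hxi]
  nlinarith

theorem sum_inv_one_add_eq_of_hfun_eq_one {n : ℕ} {a : ℝ} {x : Fin n → ℝ}
    (hx : ∀ i, 0 ≤ x i) (h : hfun n a x = 1) :
    ∑ i, (1 + x i)⁻¹ = n - 1 + (1 - a) / ∏ j, (1 + x j) := by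
  have hterm : ∀ i, x i / (1 + x i) = 1 - (1 + x i)⁻¹ := fun i => by
    field_simp [(by linarith [hx i] : 1 + x i ≠ 0)]; ring
  simp only [hfun, hterm, sum_sub_distrib, sum_const, card_univ, Fintype.card_fin,
    nsmul_eq_mul, mul_one] at h
  linarith

theorem sum_inv_div_one_add_sub_div_eq_of_hfun_eq_one {n : ℕ} {a : ℝ} {x y : Fin n → ℝ}
    (hx : ∀ i, 0 ≤ x i) (hy : ∀ i, 0 ≤ y i) (h : hfun n a y = 1) :
    ∑ i, (1 + x i)⁻¹ / (1 + (y i - x i) / (1 + x i)) =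
      n - 1 + (1 - a) / (∏ j, (1 + x j)) / ∏ j, (1 + (y j - x j) / (1 + x j)) := by
  have hx1 : ∀ i, 1 + x i ≠ 0 := fun i => by linarith [hx i]
  have hterm : ∀ i, (1 + x i)⁻¹ / (1 + (y i - x i) / (1 + x i)) = (1 + y i)⁻¹ := fun i => by
    rw [one_add_sub_div_one_add (hx1 i)]
    field_simp [hx1 i, (by linarith [hy i] : 1 + y i ≠ 0)]
  rw [sum_congr rfl fun i _ => hterm i, sum_inv_one_add_eq_of_hfun_eq_one hy h,
    prod_one_add_eq_mul_prod_one_add_sub_div y hx1, div_mul_eq_div_div]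

theorem stmt5_general (n : ℕ) (a : ℝ) (ha0 : 0 < a) (ha1 : a < 1)
    (xs : Fin n → ℝ) (hxs : ∀ i, 0 < xs i) (hxB : hfun n a xs = 1) :
    ∃ ε > 0, ∀ y : Fin n → ℝ, (∀ i, 0 ≤ y i) → hfun n a y = 1 →
      0 < ‖y - xs‖ → ‖y - xs‖ < ε →
      (∏ j, (1 + xs j)) * (1 + ∑ i, (y i - xs i) / (1 + xs i)) >
        ∏ j, (1 + y j) := by
  have hx1 : ∀ i, 0 < 1 + xs i := fun i => by linarith [hxs i]
  have hP1 : 1 ≤ ∏ j, (1 + xs j) := one_le_prod fun j _ => by linarith [hxs j]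
  have hP : 0 < ∏ j, (1 + xs j) := zero_lt_one.trans_le hP1
  have key := eventually_prod_one_add_lt_one_add_sum (fun i => (1 + xs i)⁻¹)
    ((1 - a) / ∏ j, (1 + xs j)) (div_nonneg (by linarith) hP.le)
    ((div_lt_one hP).2 (by linarith))
    (div_prod_one_add_lt_inv_one_add (fun i => (hxs i).le) (by linarith))
    (fun i => inv_lt_one_of_one_lt₀ (by linarith [hxs i]))
    (by simpa using sum_inv_one_add_eq_of_hfun_eq_one (fun i => (hxs i).le) hxB)
  have hcont : Tendsto (fun y : Fin n → ℝ => fun i => (y i - xs i) / (1 + xs i)) (𝓝 xs) (𝓝 0) :=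
    (by fun_prop : Continuous _).tendsto' xs 0 (funext fun i => by simp)
  obtain ⟨ε, hε, hball⟩ := Metric.eventually_nhds_iff.1 (hcont.eventually key)
  refine ⟨ε, hε, fun y hy hyB hpos hlt => ?_⟩
  rw [gt_iff_lt, prod_one_add_eq_mul_prod_one_add_sub_div y fun i => (hx1 i).ne']
  refine mul_lt_mul_of_pos_left (hball (by rwa [dist_eq_norm]) (fun i => ?_)
    (by simpa using sum_inv_div_one_add_sub_div_eq_of_hfun_eq_one (fun i => (hxs i).le) hy hyB)
    fun h => hpos.ne' (norm_eq_zero.2 (sub_eq_zero.2 (funext fun i => ?_)))) hP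
  · rw [one_add_sub_div_one_add (hx1 i).ne', div_eq_mul_inv]
    exact le_mul_of_one_le_left (inv_nonneg.2 (hx1 i).le) (by linarith [hy i])
  · simpa [sub_eq_zero, (hx1 i).ne'] using congr_fun h i

theorem stmt5 (n : ℕ) (hn : 2 ≤ n) (a : ℝ) (ha0 : 0 < a) (ha1 : a < 1)
    (xs : Fin n → ℝ) (hxs : ∀ i, 0 < xs i) (hxB : hfun n a xs = 1) :
    ∃ ε > 0, ∀ y : Fin n → ℝ, (∀ i, 0 ≤ y i) → hfun n a y = 1 →
      0 < ‖y - xs‖ → ‖y - xs‖ < ε →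
      (∏ j, (1 + xs j)) * (1 + ∑ i, (y i - xs i) / (1 + xs i)) >
        ∏ j, (1 + y j) :=
  stmt5_general n a ha0 ha1 xs hxs hxB
end

section
/- (Ray characterization of the boundary.) Let y ∈ (0,∞)^n, set ȳ_i = y_i/(L_i N̄_i), and let λ* be the unique positive real with h(λ* ȳ) = 1. Then sup{θ ≥ 0 : θ · y ∈ R} = λ* / X(λ* ȳ, N̄); that is, the boundary of the rate region along the ray through y is attained at attempt-rate vector x = λ* ȳ and maximal burst sizes N = N̄. -/
open Finset

private lemma one_le_prodA {n : ℕ} (s : Finset (Fin n)) (v : Fin n → ℝ)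
    (hv : ∀ i, 0 ≤ v i) : (1:ℝ) ≤ ∏ i ∈ s, (1 + v i) := by
  induction s using Finset.induction_on with
  | empty => simp
  | @insert k s hk ih =>
    rw [Finset.prod_insert hk]
    nlinarith [hv k, ih]

private lemma prod_lb {n : ℕ} (s : Finset (Fin n)) (v x : Fin n → ℝ)
    (hv : ∀ i, 0 ≤ v i) (hvx : ∀ i, v i ≤ x i) :
    ∏ i ∈ s, (1 + v i) + ∑ i ∈ s, (x i - v i) ≤ ∏ i ∈ s, (1 + x i) := by
  induction s using Finset.induction_on with
  | empty => simp
  | @insert k s hk ih =>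
    rw [Finset.prod_insert hk, Finset.prod_insert hk, Finset.sum_insert hk]
    have hB := one_le_prodA s v hv
    have hS : 0 ≤ ∑ i ∈ s, (x i - v i) := Finset.sum_nonneg fun i _ => by linarith [hvx i]
    nlinarith [hv k, hvx k, ih, hB, hS,
      mul_le_mul_of_nonneg_left ih (show (0:ℝ) ≤ 1 + x k by linarith [hv k, hvx k]),
      mul_nonneg (sub_nonneg.2 (hvx k)) (sub_nonneg.2 hB),
      mul_nonneg (le_trans (hv k) (hvx k)) hS]

private lemma conv_gap {n : ℕ} (s : Finset (Fin n)) (w : Fin n → ℝ) (hw : ∀ i, 0 ≤ w i)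
    (t u : ℝ) (ht : 0 ≤ t) (hu : 0 ≤ u) :
    (u - t) * ∑ i ∈ s, w i * ∏ j ∈ s.erase i, (1 + t * w j)
      ≤ ∏ i ∈ s, (1 + u * w i) - ∏ i ∈ s, (1 + t * w i) := by
  induction s using Finset.induction_on with
  | empty => simp
  | @insert k s hk ih =>
    have hrw : ∑ i ∈ insert k s, w i * ∏ j ∈ (insert k s).erase i, (1 + t * w j)
        = w k * ∏ j ∈ s, (1 + t * w j)
          + (1 + t * w k) * ∑ i ∈ s, w i * ∏ j ∈ s.erase i, (1 + t * w j) := by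
      rw [Finset.sum_insert hk, Finset.erase_insert hk, Finset.mul_sum]
      congr 1
      refine Finset.sum_congr rfl fun i hi => ?_
      have hik : i ≠ k := by rintro rfl; exact hk hi
      rw [Finset.erase_insert_of_ne hik.symm, Finset.prod_insert (fun h => hk (Finset.mem_of_mem_erase h))]
      ring
    rw [hrw, Finset.prod_insert hk, Finset.prod_insert hk]
    have hS : 0 ≤ ∑ i ∈ s, w i * ∏ j ∈ s.erase i, (1 + t * w j) :=
      Finset.sum_nonneg fun i _ => mul_nonneg (hw i)
        (Finset.prod_nonneg fun j _ => by nlinarith [ht, hw j, mul_nonneg ht (hw j)])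
    nlinarith [ih, hS, hw k,
      mul_le_mul_of_nonneg_left ih (show (0:ℝ) ≤ 1 + u * w k by nlinarith [mul_nonneg hu (hw k)]),
      mul_nonneg (mul_nonneg (sq_nonneg (u - t)) (hw k)) hS]

private lemma XposA {n : ℕ} (a : ℝ) (ha : 0 < a) (x N : Fin n → ℝ)
    (hx : ∀ i, 0 ≤ x i) (hN : ∀ i, 1 ≤ N i) : 0 < Xfun n a x N := by
  have h1 : 0 ≤ ∑ k, (N k - 1) * x k :=
    Finset.sum_nonneg fun k _ => mul_nonneg (by linarith [hN k]) (hx k)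
  have h2 : (1:ℝ) ≤ ∏ k, (1 + x k) := one_le_prodA _ _ hx
  unfold Xfun
  linarith

theorem stmt8 (n : ℕ) (hn : 2 ≤ n) (a : ℝ) (ha0 : 0 < a) (ha1 : a < 1)
    (L Nlo Nhi : Fin n → ℝ) (hL : ∀ i, 0 < L i)
    (hNlo : ∀ i, 1 ≤ Nlo i) (hNhi : ∀ i, Nlo i ≤ Nhi i)
    (y : Fin n → ℝ) (hy : ∀ i, 0 < y i)
    (ybar : Fin n → ℝ) (hybar : ∀ i, ybar i = y i / (L i * Nhi i))
    (lam : ℝ) (hlam : 0 < lam) (hlamB : hfun n a (lam • ybar) = 1)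
    (hlamuniq : ∀ μ : ℝ, 0 < μ → hfun n a (μ • ybar) = 1 → μ = lam) :
    sSup {θ : ℝ | 0 ≤ θ ∧ θ • y ∈ rateRegion n a L Nlo Nhi} =
      lam / Xfun n a (lam • ybar) Nhi := by
  have hNhiO : ∀ i, 1 ≤ Nhi i := fun i => (hNlo i).trans (hNhi i)
  have hNhiP : ∀ i, (0:ℝ) < Nhi i := fun i => lt_of_lt_of_le one_pos (hNhiO i)
  have hybarP : ∀ i, 0 < ybar i := fun i => by
    rw [hybar i]; exact div_pos (hy i) (mul_pos (hL i) (hNhiP i))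
  have hznn : ∀ i, 0 ≤ (lam • ybar) i := fun i => mul_nonneg hlam.le (hybarP i).le
  have hX0pos : 0 < Xfun n a (lam • ybar) Nhi := XposA a ha0 _ _ hznn hNhiO
  -- star identity : lam * S + (1 - a) = Pl
  have hPlpos : 0 < ∏ j, (1 + lam * ybar j) :=
    Finset.prod_pos fun j _ => by nlinarith [hybarP j, hlam]
  have hstar : lam * (∑ i, ybar i * ∏ j ∈ Finset.univ.erase i, (1 + lam * ybar j)) + (1 - a)
      = ∏ j, (1 + lam * ybar j) := by
    have h1 : (∑ i, (lam * ybar i) / (1 + lam * ybar i))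
        + (1 - a) / ∏ j, (1 + lam * ybar j) = 1 := by
      simpa [hfun, Pi.smul_apply, smul_eq_mul] using hlamB
    have h2 : (∑ i, (lam * ybar i) / (1 + lam * ybar i)) * (∏ j, (1 + lam * ybar j))
        + (1 - a) = ∏ j, (1 + lam * ybar j) := by
      have h := congrArg (fun r => r * ∏ j, (1 + lam * ybar j)) h1
      simp only [add_mul, one_mul] at h
      rwa [div_mul_cancel₀ _ (ne_of_gt hPlpos)] at h
    have h3 : (∑ i, (lam * ybar i) / (1 + lam * ybar i)) * (∏ j, (1 + lam * ybar j))
        = lam * (∑ i, ybar i * ∏ j ∈ Finset.univ.erase i, (1 + lam * ybar j)) := by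
      rw [Finset.sum_mul, Finset.mul_sum]
      refine Finset.sum_congr rfl fun i _ => ?_
      have hd : (0:ℝ) < 1 + lam * ybar i := by nlinarith [hybarP i, hlam]
      rw [← Finset.mul_prod_erase Finset.univ _ (Finset.mem_univ i)]
      field_simp
    linarith [h2, h3]
  -- membership
  have hmem : lam / Xfun n a (lam • ybar) Nhi
      ∈ {θ : ℝ | 0 ≤ θ ∧ θ • y ∈ rateRegion n a L Nlo Nhi} := by
    refine ⟨div_nonneg hlam.le hX0pos.le, lam • ybar, Nhi, hznn,
      fun i => ⟨hNhi i, le_refl _⟩, ?_⟩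
    funext i
    show lam / Xfun n a (lam • ybar) Nhi * y i = _
    simp only [sVec, Pi.smul_apply, smul_eq_mul]
    rw [hybar i]
    field_simp [(hL i).ne', (hNhiP i).ne', (ne_of_gt hX0pos)]
  -- upper bound
  have hub : ∀ θ ∈ {θ : ℝ | 0 ≤ θ ∧ θ • y ∈ rateRegion n a L Nlo Nhi},
      θ ≤ lam / Xfun n a (lam • ybar) Nhi := by
    rintro θ ⟨hθ0, x, N, hx, hN, heq⟩
    have hN1 : ∀ i, 1 ≤ N i := fun i => (hNlo i).trans (hN i).1
    have hNpos : ∀ i, (0:ℝ) < N i := fun i => lt_of_lt_of_le one_pos (hN1 i)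
    have hXpos : 0 < Xfun n a x N := XposA a ha0 x N hx hN1
    set c := θ * Xfun n a x N with hc
    have hcnn : 0 ≤ c := mul_nonneg hθ0 hXpos.le
    have k1 : ∀ i, N i * (L i * x i) = c * y i := by
      intro i
      have h := congrFun heq i
      simp only [Pi.smul_apply, smul_eq_mul, sVec] at h
      rw [eq_div_iff (ne_of_gt hXpos)] at h
      rw [hc]; linarith [h]
    have k2 : ∀ i, Nhi i * (L i * (c * ybar i)) = c * y i := by
      intro i
      rw [hybar i]
      field_simp [(hL i).ne', (hNhiP i).ne']
    have hvle : ∀ i, c * ybar i ≤ x i := by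
      intro i
      have h3 : (Nhi i - N i) * (L i * (c * ybar i)) ≥ 0 :=
        mul_nonneg (sub_nonneg.2 (hN i).2)
          (mul_nonneg (hL i).le (mul_nonneg hcnn (hybarP i).le))
      nlinarith [k1 i, k2 i, mul_pos (hNpos i) (hL i)]
    have hvnn : ∀ i, 0 ≤ c * ybar i := fun i => mul_nonneg hcnn (hybarP i).le
    -- Step 1 : Xfun(c•ybar, Nhi) ≤ Xfun(x, N)
    have hXv : Xfun n a (c • ybar) Nhi ≤ Xfun n a x N := by
      have hNx : ∀ i, Nhi i * (c * ybar i) = N i * x i := by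
        intro i
        have := k1 i; have := k2 i
        have hLne := (hL i).ne'
        nlinarith [k1 i, k2 i, hL i]
      have hsum : ∑ k, (Nhi k - 1) * ((c • ybar) k)
          = ∑ k, ((N k - 1) * x k) + ∑ k, (x k - c * ybar k) := by
        rw [← Finset.sum_add_distrib]
        refine Finset.sum_congr rfl fun k _ => ?_
        have := hNx k
        simp only [Pi.smul_apply, smul_eq_mul]
        linarith [hNx k]
      have hprod := prod_lb Finset.univ (fun k => c * ybar k) x hvnn hvle
      simp only [Xfun, Pi.smul_apply, smul_eq_mul] at hsum ⊢
      linarith [hsum, hprod]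
    have hXvpos : 0 < Xfun n a (c • ybar) Nhi :=
      XposA a ha0 _ Nhi (fun i => hvnn i) hNhiO
    -- Step 2 : θ ≤ c / Xfun(c•ybar, Nhi)
    have hθc : θ = c / Xfun n a x N := by
      rw [hc, mul_div_assoc, div_self (ne_of_gt hXpos), mul_one]
    have step2 : θ ≤ c / Xfun n a (c • ybar) Nhi := by
      rw [hθc, div_le_div_iff₀ hXpos hXvpos]
      exact mul_le_mul_of_nonneg_left hXv hcnn
    -- Step 3 : c / Xfun(c•ybar,Nhi) ≤ lam / Xfun(lam•ybar,Nhi)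
    have step3 : c / Xfun n a (c • ybar) Nhi ≤ lam / Xfun n a (lam • ybar) Nhi := by
      rw [div_le_div_iff₀ hXvpos hX0pos]
      have hgap := conv_gap Finset.univ ybar (fun i => (hybarP i).le) lam c hlam.le hcnn
      have hgap' := mul_le_mul_of_nonneg_left hgap hlam.le
      have ha' : a = lam * (∑ i, ybar i * ∏ j ∈ Finset.univ.erase i, (1 + lam * ybar j))
          + 1 - (∏ j, (1 + lam * ybar j)) := by linarith [hstar]
      have hB1 : ∑ k, (Nhi k - 1) * ((lam • ybar) k)
          = lam * ∑ k, (Nhi k - 1) * ybar k := by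
        rw [Finset.mul_sum]
        exact Finset.sum_congr rfl fun k _ => by
          simp only [Pi.smul_apply, smul_eq_mul]; ring
      have hB2 : ∑ k, (Nhi k - 1) * ((c • ybar) k)
          = c * ∑ k, (Nhi k - 1) * ybar k := by
        rw [Finset.mul_sum]
        exact Finset.sum_congr rfl fun k _ => by
          simp only [Pi.smul_apply, smul_eq_mul]; ring
      simp only [Xfun]
      rw [hB1, hB2]
      simp only [Pi.smul_apply, smul_eq_mul]
      rw [ha']
      nlinarith [hgap', hcnn, hlam]
    exact step2.trans step3
  exact le_antisymm (csSup_le ⟨_, hmem⟩ hub) (le_csSup ⟨_, hub⟩ hmem)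
end

section
/- (Stationarity condition is independent of burst sizes.) Fix x̄ ∈ (0,∞)^n and N with N_i ≥ 1 for all i, and define f(λ) = λ / X(λ x̄, N) for λ > 0. Then f'(λ) = 0 if and only if h(λ x̄) = 1. -/
open Finset

/-!
Along the ray `t ↦ t • x̄` the function `X` is `a - 1 + t S + P(t)`, with `S = ∑ (N_k - 1) x̄_k`
and `P(t) = ∏ (1 + t x̄_k)`. Since `f = t / X`, the condition `f'(λ) = 0` reads `X = λ X'`.
The linear term `λ S` appears on both sides and cancels, which is why `N` drops out, and the
logarithmic derivative gives `λ P'(λ) = P(λ) ∑ λ x̄_i / (1 + λ x̄_i)`. What remains,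
`a - 1 + P = P ∑ λ x̄_i / (1 + λ x̄_i)`, is `h(λ x̄) = 1` after dividing by `P`.
-/

theorem deriv_div_self_eq_zero_iff {g : ℝ → ℝ} {g' x : ℝ} (hg : HasDerivAt g g' x)
    (hgx : g x ≠ 0) : deriv (fun t => t / g t) x = 0 ↔ g x = x * g' := by
  rw [((hasDerivAt_id' x).fun_div hg hgx).deriv, div_eq_zero_iff, sub_eq_zero]
  simp [hgx]

theorem hasDerivAt_prod_one_add_mul {ι : Type*} (s : Finset ι) (v : ι → ℝ) {x : ℝ}
    (hv : ∀ k ∈ s, 1 + x * v k ≠ 0) :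
    HasDerivAt (fun t => ∏ k ∈ s, (1 + t * v k))
      ((∏ k ∈ s, (1 + x * v k)) * ∑ i ∈ s, v i / (1 + x * v i)) x := by
  classical
  have h := HasDerivAt.fun_finsetProd (u := s) (x := x)
    (fun i _ => (hasDerivAt_mul_const (v i)).const_add 1)
  simp only [smul_eq_mul] at h
  refine h.congr_deriv ?_
  rw [mul_sum]
  refine sum_congr rfl fun i hi => ?_
  rw [← mul_prod_erase s _ hi]
  field_simp [hv i hi]

theorem Xfun_smul (n : ℕ) (a t : ℝ) (x N : Fin n → ℝ) :
    Xfun n a (t • x) N = a + t * ∑ k, (N k - 1) * x k + ∏ k, (1 + t * x k) - 1 := by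
  simp only [Xfun, Pi.smul_apply, smul_eq_mul, mul_sum]
  congr 3
  exact sum_congr rfl fun k _ => by ring

theorem hasDerivAt_Xfun_smul (n : ℕ) (a : ℝ) (x N : Fin n → ℝ) {t : ℝ}
    (hx : ∀ k, 1 + t * x k ≠ 0) :
    HasDerivAt (fun s => Xfun n a (s • x) N)
      (∑ k, (N k - 1) * x k + (∏ k, (1 + t * x k)) * ∑ i, x i / (1 + t * x i)) t := by
  simp only [Xfun_smul]
  exact (((hasDerivAt_mul_const _).const_add a).add
    (hasDerivAt_prod_one_add_mul univ x fun k _ => hx k)).sub_const 1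

theorem Xfun_pos (n : ℕ) {a : ℝ} (ha : 0 < a) {x N : Fin n → ℝ} (hx : ∀ k, 0 ≤ x k)
    (hN : ∀ k, 1 ≤ N k) : 0 < Xfun n a x N := by
  have hS : 0 ≤ ∑ k, (N k - 1) * x k :=
    sum_nonneg fun k _ => mul_nonneg (sub_nonneg.mpr (hN k)) (hx k)
  have hP : 1 ≤ ∏ k, (1 + x k) := Finset.one_le_prod fun k _ => le_add_of_nonneg_right (hx k)
  unfold Xfun
  linarith

theorem stmt9_general (n : ℕ) (a : ℝ) (ha0 : 0 < a)
    (xb : Fin n → ℝ) (hxb : ∀ i, 0 < xb i)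
    (N : Fin n → ℝ) (hN : ∀ i, 1 ≤ N i)
    (lam : ℝ) (hlam : 0 < lam) :
    deriv (fun t : ℝ => t / Xfun n a (t • xb) N) lam = 0 ↔
      hfun n a (lam • xb) = 1 := by
  have hfac : ∀ k, 0 < 1 + lam * xb k := fun k => by nlinarith [hxb k]
  have hP : 0 < ∏ k, (1 + lam * xb k) := prod_pos fun k _ => hfac k
  have hX : Xfun n a (lam • xb) N ≠ 0 :=
    (Xfun_pos n ha0 (fun k => by simpa using mul_nonneg hlam.le (hxb k).le) hN).ne'
  rw [deriv_div_self_eq_zero_iff (hasDerivAt_Xfun_smul n a xb N fun k => (hfac k).ne') hX,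
    Xfun_smul]
  have hsum : lam * ∑ i, xb i / (1 + lam * xb i) = ∑ i, lam * xb i / (1 + lam * xb i) := by
    rw [mul_sum]; exact sum_congr rfl fun i _ => by ring
  simp only [hfun, Pi.smul_apply, smul_eq_mul]
  rw [mul_add, mul_left_comm, hsum, add_div' _ _ _ hP.ne', div_eq_one_iff_eq hP.ne']
  constructor <;> intro h <;> linarith

theorem stmt9 (n : ℕ) (hn : 2 ≤ n) (a : ℝ) (ha0 : 0 < a) (ha1 : a < 1)
    (L : Fin n → ℝ) (hL : ∀ i, 0 < L i)
    (xb : Fin n → ℝ) (hxb : ∀ i, 0 < xb i)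
    (N : Fin n → ℝ) (hN : ∀ i, 1 ≤ N i)
    (lam : ℝ) (hlam : 0 < lam) :
    deriv (fun t : ℝ => t / Xfun n a (t • xb) N) lam = 0 ↔
      hfun n a (lam • xb) = 1 :=
  stmt9_general n a ha0 xb hxb N hN lam hlam
end

section
/- (Monotonicity of ray throughput in burst size.) Fix λ > 0, y ∈ (0,∞)^n and L_i > 0, and for a vector N of burst sizes with N_i ≥ 1 set x_i(N) = λ y_i/(L_i N_i) and g(N) = λ / X(x(N), N). Then for each k, g is nondecreasing in N_k on [1,∞) (the other components of N held fixed); equivalently, N_k ↦ X(x(N), N) is nonincreasing on [1,∞). -/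
open Finset

theorem stmt11 (n : ℕ) (hn : 2 ≤ n) (a : ℝ) (ha0 : 0 < a) (ha1 : a < 1)
    (L : Fin n → ℝ) (hL : ∀ i, 0 < L i)
    (lam : ℝ) (hlam : 0 < lam) (y : Fin n → ℝ) (hy : ∀ i, 0 < y i)
    (N : Fin n → ℝ) (hN : ∀ i, 1 ≤ N i) (k : Fin n) :
    MonotoneOn (fun t : ℝ =>
        lam / Xfun n a (fun i => lam * y i / (L i * Function.update N k t i))
          (Function.update N k t)) (Set.Ici 1) ∧
    AntitoneOn (fun t : ℝ =>
        Xfun n a (fun i => lam * y i / (L i * Function.update N k t i))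
          (Function.update N k t)) (Set.Ici 1) := by
  set d := lam * y k / L k with hd
  have hd0 : 0 < d := by
    have := hL k; have := hy k; positivity
  set S := ∑ i ∈ {k}ᶜ, (N i - 1) * (lam * y i / (L i * N i)) with hSdef
  set P := ∏ i ∈ {k}ᶜ, (1 + lam * y i / (L i * N i)) with hPdef
  have hS0 : 0 ≤ S := by
    apply Finset.sum_nonneg
    intro i _
    have h1 := hN i; have h2 := hL i; have h3 := hy i
    have : 0 ≤ lam * y i / (L i * N i) := by positivity
    nlinarith
  have hP1 : 1 ≤ P := by
    rw [hPdef]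
    calc (1:ℝ) = ∏ _i ∈ ({k}ᶜ : Finset (Fin n)), (1:ℝ) := by simp
    _ ≤ ∏ i ∈ {k}ᶜ, (1 + lam * y i / (L i * N i)) := by
        apply Finset.prod_le_prod
        · intro i _; norm_num
        · intro i _
          have h1 := hN i; have h2 := hL i; have h3 := hy i
          have : 0 ≤ lam * y i / (L i * N i) := by positivity
          linarith
  have key : ∀ t : ℝ, t ∈ Set.Ici (1:ℝ) →
      Xfun n a (fun i => lam * y i / (L i * Function.update N k t i))
          (Function.update N k t)
        = a + S + d + P - 1 + (d / t) * (P - 1) := by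
    intro t ht
    have ht0 : (0:ℝ) < t := lt_of_lt_of_le one_pos ht
    unfold Xfun
    rw [Fintype.sum_eq_add_sum_compl k, Fintype.prod_eq_mul_prod_compl k]
    simp only [Function.update_self]
    have hsum : ∑ i ∈ {k}ᶜ, (Function.update N k t i - 1) *
        (lam * y i / (L i * Function.update N k t i)) = S := by
      rw [hSdef]
      apply Finset.sum_congr rfl
      intro i hi
      simp only [Finset.mem_compl, Finset.mem_singleton] at hi
      rw [Function.update_of_ne hi]
    have hprod : ∏ i ∈ {k}ᶜ, (1 + lam * y i / (L i * Function.update N k t i)) = P := by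
      rw [hPdef]
      apply Finset.prod_congr rfl
      intro i hi
      simp only [Finset.mem_compl, Finset.mem_singleton] at hi
      rw [Function.update_of_ne hi]
    rw [hsum, hprod]
    have hx : lam * y k / (L k * t) = d / t := by rw [hd, div_div]
    rw [hx]
    field_simp
    ring
  have hXpos : ∀ t : ℝ, t ∈ Set.Ici (1:ℝ) →
      0 < Xfun n a (fun i => lam * y i / (L i * Function.update N k t i))
          (Function.update N k t) := by
    intro t ht
    rw [key t ht]
    have ht0 : (0:ℝ) < t := lt_of_lt_of_le one_pos ht
    have h1 : 0 ≤ (d / t) * (P - 1) := by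
      apply mul_nonneg (by positivity)
      linarith
    linarith
  have hanti : AntitoneOn (fun t : ℝ =>
        Xfun n a (fun i => lam * y i / (L i * Function.update N k t i))
          (Function.update N k t)) (Set.Ici 1) := by
    intro s hs t ht hst
    simp only
    rw [key s hs, key t ht]
    have hs0 : (0:ℝ) < s := lt_of_lt_of_le one_pos hs
    have hdiv : d / t ≤ d / s := div_le_div_of_nonneg_left hd0.le hs0 hst
    have : (d / t) * (P - 1) ≤ (d / s) * (P - 1) :=
      mul_le_mul_of_nonneg_right hdiv (by linarith)
    linarith
  refine ⟨?_, hanti⟩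
  intro s hs t ht hst
  simp only
  exact div_le_div_of_nonneg_left hlam.le (hXpos t ht) (hanti hs ht hst)
end

section
/- (Lemma 2: normal vector to the rate region boundary.) Let x* ∈ B, and define b_i(x) = (1/(L_i N̄_i)) ((N̄_i − 1)/∏_{j=1}^n (1 + x_j) + 1/(1 + x_i)). Then for every k ∈ {1,…,n}, ∑_{i=1}^n b_i(x*) · ∂s_i(x, N̄)/∂x_k evaluated at x = x* equals 0; i.e., b(x*) is normal to the boundary surface {s(x, N̄) : x ∈ B} at s(x*, N̄). -/
/-!
With `c i = N i * L i`, differentiating `s i = c i * x i / X` in `x k` gives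
`∂ₖ s i = (δᵢₖ c i X - c i x i ∂ₖX) / X²`, so `∑ b i ∂ₖ s i` is proportional to
`b k c k X - (∑ b i c i x i) ∂ₖX`. Writing `P = ∏ (1 + x j)`, the boundary equation `h x = 1`
turns `∑ b i c i x i` into `X / P`, while `b k c k = (N k - 1) / P + 1 / (1 + x k) = ∂ₖX / P`
because `∂ₖX = N k - 1 + P / (1 + x k)`. Both terms are therefore `X ∂ₖX / P`.
-/

open Finset

open Function

section PartialDerivatives

variable {ι : Type*} [DecidableEq ι]

lemma hasDerivAt_update_apply (x : ι → ℝ) (k i : ι) :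
    HasDerivAt (fun t => update x k t i) (if i = k then 1 else 0) (x k) := by
  simpa [Pi.single_apply] using hasDerivAt_pi.1 (hasDerivAt_update x k (x k)) i

lemma hasDerivAt_prod_one_add_update [Fintype ι] (x : ι → ℝ) (k : ι) :
    HasDerivAt (fun t => ∏ j, (1 + update x k t j)) (∏ j ∈ univ.erase k, (1 + x j)) (x k) :=
  (HasDerivAt.fun_finsetProd fun i _ => (hasDerivAt_update_apply x k i).const_add 1).congr_deriv
    (by simp)

lemma hasDerivAt_sum_mul_update [Fintype ι] (c x : ι → ℝ) (k : ι) :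
    HasDerivAt (fun t => ∑ j, c j * update x k t j) (c k) (x k) :=
  (HasDerivAt.fun_sum fun i _ => (hasDerivAt_update_apply x k i).const_mul (c i)).congr_deriv
    (by simp)

end PartialDerivatives

section RateRegion

variable {n : ℕ} {a : ℝ} {L N x : Fin n → ℝ}

lemma hasDerivAt_Xfun_update (k : Fin n) :
    HasDerivAt (fun t => Xfun n a (update x k t) N)
      (N k - 1 + ∏ j ∈ univ.erase k, (1 + x j)) (x k) := by
  simpa [Xfun] using (((hasDerivAt_sum_mul_update (fun j => N j - 1) x k).const_add a).add
    (hasDerivAt_prod_one_add_update x k)).sub_const 1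

lemma hasDerivAt_sVec_update (k i : Fin n) (hX : Xfun n a x N ≠ 0) :
    HasDerivAt (fun t => sVec n a L (update x k t) N i)
      ((N i * L i * (if i = k then 1 else 0) * Xfun n a x N
        - N i * L i * x i * (N k - 1 + ∏ j ∈ univ.erase k, (1 + x j))) / Xfun n a x N ^ 2)
      (x k) :=
  (((hasDerivAt_update_apply x k i).const_mul (N i * L i)).div
    (hasDerivAt_Xfun_update k) (by rwa [update_eq_self])).congr_deriv (by rw [update_eq_self])

lemma bvec_mul_eq (i : Fin n) (hL : L i ≠ 0) (hN : N i ≠ 0) :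
    bvec n L N x i * (N i * L i) = (N i - 1) / ∏ j, (1 + x j) + 1 / (1 + x i) := by
  unfold bvec
  field_simp

lemma sum_bvec_mul_eq (hB : hfun n a x = 1) (hx : ∀ i, 1 + x i ≠ 0) (hL : ∀ i, L i ≠ 0)
    (hN : ∀ i, N i ≠ 0) :
    ∑ i, bvec n L N x i * (N i * L i * x i) = Xfun n a x N / ∏ j, (1 + x j) := by
  have hP : ∏ j, (1 + x j) ≠ 0 := prod_ne_zero_iff.2 fun j _ => hx j
  have hsum : ∑ i, x i / (1 + x i) = 1 - (1 - a) / ∏ j, (1 + x j) := eq_sub_of_add_eq hB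
  calc ∑ i, bvec n L N x i * (N i * L i * x i)
      = ∑ i, ((N i - 1) * x i / ∏ j, (1 + x j) + x i / (1 + x i)) := by
        refine sum_congr rfl fun i _ => ?_
        rw [← mul_assoc, bvec_mul_eq i (hL i) (hN i)]
        field_simp
    _ = Xfun n a x N / ∏ j, (1 + x j) := by
        rw [sum_add_distrib, ← sum_div, hsum, Xfun]
        field_simp
        ring

theorem sum_bvec_mul_deriv_sVec_update_eq_zero (hB : hfun n a x = 1) (hx : ∀ i, 1 + x i ≠ 0)
    (hL : ∀ i, L i ≠ 0) (hN : ∀ i, N i ≠ 0) (hX : Xfun n a x N ≠ 0) (k : Fin n) :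
    ∑ i, bvec n L N x i * deriv (fun t => sVec n a L (update x k t) N i) (x k) = 0 := by
  have hPQ : ∏ j, (1 + x j) = (1 + x k) * ∏ j ∈ univ.erase k, (1 + x j) :=
    (mul_prod_erase univ _ (mem_univ k)).symm
  have hQ : ∏ j ∈ univ.erase k, (1 + x j) ≠ 0 := prod_ne_zero_iff.2 fun j _ => hx j
  simp_rw [(hasDerivAt_sVec_update k _ hX).deriv, mul_div_assoc', ← sum_div, mul_sub,
    sum_sub_distrib, div_eq_zero_iff, sub_eq_zero]
  left
  calc ∑ i, bvec n L N x i * (N i * L i * (if i = k then 1 else 0) * Xfun n a x N)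
      = bvec n L N x k * (N k * L k) * Xfun n a x N := by simp [mul_assoc]
    _ = (∑ i, bvec n L N x i * (N i * L i * x i))
          * (N k - 1 + ∏ j ∈ univ.erase k, (1 + x j)) := by
        rw [bvec_mul_eq k (hL k) (hN k), sum_bvec_mul_eq hB hx hL hN, hPQ]
        field_simp [hx k, hQ]
    _ = ∑ i, bvec n L N x i * (N i * L i * x i * (N k - 1 + ∏ j ∈ univ.erase k, (1 + x j))) := by
        simp only [sum_mul, mul_assoc]

end RateRegion

theorem stmt13_general (n : ℕ) (a : ℝ) (ha0 : 0 < a)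
    (L Nhi : Fin n → ℝ) (hL : ∀ i, 0 < L i) (hNhi : ∀ i, 1 ≤ Nhi i)
    (xs : Fin n → ℝ) (hxs : ∀ i, 0 ≤ xs i) (hB : hfun n a xs = 1) :
    ∀ k : Fin n,
      ∑ i, bvec n L Nhi xs i *
        deriv (fun t : ℝ => sVec n a L (Function.update xs k t) Nhi i) (xs k) = 0 := by
  have hP : 1 ≤ ∏ j, (1 + xs j) := one_le_prod fun j _ => le_add_of_nonneg_right (hxs j)
  have hS : 0 ≤ ∑ i, (Nhi i - 1) * xs i :=
    sum_nonneg fun i _ => mul_nonneg (sub_nonneg.2 (hNhi i)) (hxs i)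
  have hX : 0 < Xfun n a xs Nhi := by unfold Xfun; linarith
  exact sum_bvec_mul_deriv_sVec_update_eq_zero hB (fun i => by linarith [hxs i])
    (fun i => (hL i).ne') (fun i => by linarith [hNhi i]) hX.ne'

theorem stmt13 (n : ℕ) (hn : 2 ≤ n) (a : ℝ) (ha0 : 0 < a) (ha1 : a < 1)
    (L Nhi : Fin n → ℝ) (hL : ∀ i, 0 < L i) (hNhi : ∀ i, 1 ≤ Nhi i)
    (xs : Fin n → ℝ) (hxs : ∀ i, 0 ≤ xs i) (hB : hfun n a xs = 1) :
    ∀ k : Fin n,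
      ∑ i, bvec n L Nhi xs i *
        deriv (fun t : ℝ => sVec n a L (Function.update xs k t) Nhi i) (xs k) = 0 :=
  stmt13_general n a ha0 L Nhi hL hNhi xs hxs hB
end

section
/- (Boundary points lie on the tangent hyperplane.) Let x* ∈ B and define b_i(x) = (1/(L_i N̄_i)) ((N̄_i − 1)/∏_{j=1}^n (1 + x_j) + 1/(1 + x_i)). Then ∑_{i=1}^n b_i(x*) s_i(x*, N̄) = 1/∏_{j=1}^n (1 + x*_j). -/
open Finset

theorem stmt14 (n : ℕ) (hn : 2 ≤ n) (a : ℝ) (ha0 : 0 < a) (ha1 : a < 1)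
    (L Nhi : Fin n → ℝ) (hL : ∀ i, 0 < L i) (hNhi : ∀ i, 1 ≤ Nhi i)
    (xs : Fin n → ℝ) (hxs : ∀ i, 0 ≤ xs i) (hB : hfun n a xs = 1) :
    ∑ i, bvec n L Nhi xs i * sVec n a L xs Nhi i = 1 / ∏ j, (1 + xs j) := by
  have hx1 : ∀ i, (0:ℝ) < 1 + xs i := fun i => by linarith [hxs i]
  have hP : (0:ℝ) < ∏ j, (1 + xs j) := prod_pos fun i _ => hx1 i
  have hP1 : (1:ℝ) ≤ ∏ j, (1 + xs j) := by
    calc (1:ℝ) = ∏ _j : Fin n, (1:ℝ) := by simp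
    _ ≤ ∏ j, (1 + xs j) :=
      Finset.prod_le_prod (fun i _ => zero_le_one) (fun i _ => by linarith [hxs i])
  have hS : (0:ℝ) ≤ ∑ k, (Nhi k - 1) * xs k :=
    sum_nonneg fun k _ => mul_nonneg (by linarith [hNhi k]) (hxs k)
  have hX : (0:ℝ) < Xfun n a xs Nhi := by
    unfold Xfun; linarith
  have step : ∀ i, bvec n L Nhi xs i * sVec n a L xs Nhi i =
      ((Nhi i - 1) * xs i / (∏ j, (1 + xs j)) + xs i / (1 + xs i)) / Xfun n a xs Nhi := by
    intro i
    have hLi := (hL i).ne'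
    have hNi : Nhi i ≠ 0 := by have := hNhi i; linarith
    unfold bvec sVec
    field_simp
  rw [Finset.sum_congr rfl fun i _ => step i, ← Finset.sum_div]
  have hsum : ∑ i, ((Nhi i - 1) * xs i / (∏ j, (1 + xs j)) + xs i / (1 + xs i))
      = (∑ i, (Nhi i - 1) * xs i) / (∏ j, (1 + xs j)) + ∑ i, xs i / (1 + xs i) := by
    rw [Finset.sum_add_distrib, Finset.sum_div]
  have hB' : ∑ i, xs i / (1 + xs i) = 1 - (1 - a) / ∏ j, (1 + xs j) := by
    unfold hfun at hB; linarith
  rw [hsum, hB']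
  have hXdef : Xfun n a xs Nhi = a + (∑ k, (Nhi k - 1) * xs k) + (∏ k, (1 + xs k)) - 1 := rfl
  rw [div_eq_div_iff hX.ne' hP.ne', hXdef]
  field_simp
  ring
end

section
/- (Algebraic reduction of the support condition.) Let x* ∈ B, let y ∈ [0,∞)^n with y ≠ 0, and define b_i(x) = (1/(L_i N̄_i)) ((N̄_i − 1)/∏_{j=1}^n (1 + x_j) + 1/(1 + x_i)). Then ∑_{i=1}^n b_i(x*) s_i(y, N̄) > 1/∏_{j=1}^n (1 + x*_j) holds if and only if ∏_{j=1}^n (1 + x*_j) · ∑_{i=1}^n y_i/(1 + x*_i) > ∏_{j=1}^n (1 + y_j) + a − 1. In particular, the condition does not involve the burst sizes N̄ or frame sizes L. -/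
open Finset

theorem stmt15 (n : ℕ) (hn : 2 ≤ n) (a : ℝ) (ha0 : 0 < a) (ha1 : a < 1)
    (L Nhi : Fin n → ℝ) (hL : ∀ i, 0 < L i) (hNhi : ∀ i, 1 ≤ Nhi i)
    (xs : Fin n → ℝ) (hxs : ∀ i, 0 ≤ xs i) (hB : hfun n a xs = 1)
    (y : Fin n → ℝ) (hy : ∀ i, 0 ≤ y i) (hyne : y ≠ 0) :
    (∑ i, bvec n L Nhi xs i * sVec n a L y Nhi i > 1 / ∏ j, (1 + xs j)) ↔
      (∏ j, (1 + xs j)) * ∑ i, y i / (1 + xs i) > ∏ j, (1 + y j) + a - 1 := by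
  have hP : 0 < ∏ j, (1 + xs j) :=
    Finset.prod_pos (fun j _ => by have := hxs j; linarith)
  have hQ : 1 ≤ ∏ j, (1 + y j) :=
    by
    calc (1:ℝ) = ∏ _j : Fin n, 1 := by simp
    _ ≤ _ := Finset.prod_le_prod (fun j _ => zero_le_one) (fun j _ => by linarith [hy j])
  have hS : 0 ≤ ∑ k, (Nhi k - 1) * y k :=
    Finset.sum_nonneg (fun k _ => mul_nonneg (by have := hNhi k; linarith) (hy k))
  have hX : 0 < Xfun n a y Nhi := by unfold Xfun; linarith
  have hterm : ∀ i, bvec n L Nhi xs i * sVec n a L y Nhi i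
      = (((Nhi i - 1) * y i) / (∏ j, (1 + xs j)) + y i / (1 + xs i)) / Xfun n a y Nhi := by
    intro i
    have hLi : L i ≠ 0 := (hL i).ne'
    have hNi : Nhi i ≠ 0 := by have := hNhi i; linarith
    have hxi : (1 + xs i) ≠ 0 := by have := hxs i; linarith
    unfold bvec sVec
    field_simp
  rw [Finset.sum_congr rfl (fun i _ => hterm i), ← Finset.sum_div]
  have hsum : (∑ i, (((Nhi i - 1) * y i) / (∏ j, (1 + xs j)) + y i / (1 + xs i)))
      = (∑ k, (Nhi k - 1) * y k) / (∏ j, (1 + xs j)) + ∑ i, y i / (1 + xs i) := by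
    rw [Finset.sum_add_distrib, Finset.sum_div]
  rw [hsum, gt_iff_lt, gt_iff_lt, div_lt_div_iff₀ hP hX, one_mul]
  have key : ((∑ k, (Nhi k - 1) * y k) / (∏ j, (1 + xs j)) + ∑ i, y i / (1 + xs i))
        * (∏ j, (1 + xs j))
      = (∑ k, (Nhi k - 1) * y k) + (∏ j, (1 + xs j)) * ∑ i, y i / (1 + xs i) := by
    field_simp
  rw [key]
  unfold Xfun
  constructor <;> intro h <;> linarith
end

section
/- (Existence and uniqueness of the boundary along rays.) For every direction d ∈ (0,∞)^n there exists a unique λ > 0 such that h(λ d) = 1. -/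
open Finset

/-!
In the variables `u i = (1 + x i)⁻¹ ∈ (0, 1]` one has `h = n - (∑ u - ∏ u) - a ∏ u`.
Moving along a ray decreases every `u i`; this does not increase `∑ u - ∏ u` and strictly
decreases `a ∏ u`, so `h` is strictly increasing on the ray. It is continuous, equals `1 - a < 1`
at the origin and exceeds `1` once every coordinate is at least `1` (this is where `n ≥ 2` enters),
so the intermediate value theorem gives exactly one crossing of the level `1`.
-/

lemma Finset.prod_sub_prod_le_sum_sub {ι : Type*} (F : Finset ι) {s t : ι → ℝ}
    (hs : ∀ i ∈ F, 0 ≤ s i) (hst : ∀ i ∈ F, s i ≤ t i) (ht : ∀ i ∈ F, t i ≤ 1) :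
    ∏ i ∈ F, t i - ∏ i ∈ F, s i ≤ ∑ i ∈ F, (t i - s i) := by
  induction F using Finset.cons_induction with
  | empty => simp
  | cons i F hi ih =>
    simp only [mem_cons, forall_eq_or_imp] at hs hst ht
    rw [prod_cons, prod_cons, sum_cons]
    have hS : 0 ≤ ∏ j ∈ F, s j := prod_nonneg hs.2
    have hST : ∏ j ∈ F, s j ≤ ∏ j ∈ F, t j := prod_le_prod hs.2 hst.2
    have hT : ∏ j ∈ F, t j ≤ 1 := prod_le_one (fun j hj => (hs.2 j hj).trans (hst.2 j hj)) ht.2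
    -- `t i * T - s i * S = t i * (T - S) + (t i - s i) * S`
    nlinarith [ih hs.2 hst.2 ht.2]

lemma hfun_eq_card_sub_sum_inv {n : ℕ} (a : ℝ) {x : Fin n → ℝ} (hx : ∀ i, 1 + x i ≠ 0) :
    hfun n a x = n - ∑ i, (1 + x i)⁻¹ + (1 - a) * ∏ i, (1 + x i)⁻¹ := by
  have hterm : ∀ i, x i / (1 + x i) = 1 - (1 + x i)⁻¹ := fun i => by
    field_simp [hx i]
    ring
  simp only [hfun, hterm, sum_sub_distrib, sum_const, card_univ, Fintype.card_fin, nsmul_eq_mul,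
    mul_one, div_eq_mul_inv, prod_inv_distrib]

lemma hfun_zero (n : ℕ) (a : ℝ) : hfun n a 0 = 1 - a := by
  simp [hfun]

lemma hfun_lt_hfun {n : ℕ} (hn : 0 < n) {a : ℝ} (ha : 0 < a) {x y : Fin n → ℝ}
    (hx : ∀ i, 0 ≤ x i) (hxy : ∀ i, x i < y i) : hfun n a x < hfun n a y := by
  have hx1 : ∀ i, 0 < 1 + x i := fun i => by linarith [hx i]
  have hy1 : ∀ i, 0 < 1 + y i := fun i => by linarith [hx i, hxy i]
  set u : Fin n → ℝ := fun i => (1 + x i)⁻¹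
  set v : Fin n → ℝ := fun i => (1 + y i)⁻¹
  have hv : ∀ i ∈ univ, 0 < v i := fun i _ => inv_pos.mpr (hy1 i)
  have hvu : ∀ i ∈ univ, v i < u i := fun i _ => inv_strictAnti₀ (hx1 i) (by linarith [hxy i])
  have hu : ∀ i ∈ univ, u i ≤ 1 := fun i _ => inv_le_one_of_one_le₀ (by linarith [hx i])
  have hprod : ∏ i, v i < ∏ i, u i :=
    prod_lt_prod_of_nonempty hv hvu (univ_nonempty_iff.mpr (Fin.pos_iff_nonempty.mp hn))
  have hsum : ∏ i, u i - ∏ i, v i ≤ ∑ i, u i - ∑ i, v i := by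
    rw [← sum_sub_distrib]
    exact prod_sub_prod_le_sum_sub univ (fun i hi => (hv i hi).le) (fun i hi => (hvu i hi).le) hu
  rw [hfun_eq_card_sub_sum_inv a (fun i => (hx1 i).ne'),
    hfun_eq_card_sub_sum_inv a (fun i => (hy1 i).ne')]
  nlinarith [mul_pos ha (sub_pos.mpr hprod)]

lemma strictMonoOn_hfun_smul {n : ℕ} (hn : 0 < n) {a : ℝ} (ha : 0 < a) {d : Fin n → ℝ}
    (hd : ∀ i, 0 < d i) : StrictMonoOn (fun t : ℝ => hfun n a (t • d)) (Set.Ici 0) :=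
  fun _ hs _ _ hst => hfun_lt_hfun hn ha (fun i => mul_nonneg hs (hd i).le)
    (fun i => mul_lt_mul_of_pos_right hst (hd i))

lemma continuousOn_hfun_smul (n : ℕ) (a : ℝ) {d : Fin n → ℝ} (hd : ∀ i, 0 ≤ d i) :
    ContinuousOn (fun t : ℝ => hfun n a (t • d)) (Set.Ici 0) := by
  have hpos : ∀ t ∈ Set.Ici (0 : ℝ), ∀ i, 0 < 1 + t * d i := fun t ht i => by
    nlinarith [mul_nonneg (Set.mem_Ici.mp ht) (hd i)]
  simp only [hfun, Pi.smul_apply, smul_eq_mul]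
  refine .add (continuousOn_finsetSum _ fun i _ => ?_) ?_
  · exact ContinuousOn.div (by fun_prop) (by fun_prop) fun t ht => (hpos t ht i).ne'
  · exact ContinuousOn.div (by fun_prop) (continuousOn_finsetProd _ fun j _ => by fun_prop)
      fun t ht => (prod_pos fun j _ => hpos t ht j).ne'

lemma one_lt_hfun {n : ℕ} (hn : 2 ≤ n) {a : ℝ} (ha : a < 1) {x : Fin n → ℝ}
    (hx : ∀ i, 1 ≤ x i) : 1 < hfun n a x := by
  have hx1 : ∀ i, 0 < 1 + x i := fun i => by linarith [hx i]
  have hhalf : ∀ i ∈ univ, (1 : ℝ) / 2 ≤ x i / (1 + x i) := fun i _ => by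
    rw [div_le_div_iff₀ two_pos (hx1 i)]
    linarith [hx i]
  have hsum : (1 : ℝ) ≤ ∑ i, x i / (1 + x i) :=
    calc (1 : ℝ) ≤ n * (1 / 2) := by
          have : (2 : ℝ) ≤ n := by exact_mod_cast hn
          linarith
      _ = ∑ _i : Fin n, (1 : ℝ) / 2 := by simp
      _ ≤ ∑ i, x i / (1 + x i) := sum_le_sum hhalf
  have hrest : 0 < (1 - a) / ∏ j, (1 + x j) := div_pos (by linarith) (prod_pos fun j _ => hx1 j)
  rw [hfun]
  linarith

theorem stmt18 (n : ℕ) (hn : 2 ≤ n) (a : ℝ) (ha0 : 0 < a) (ha1 : a < 1)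
    (d : Fin n → ℝ) (hd : ∀ i, 0 < d i) :
    ∃! lam : ℝ, 0 < lam ∧ hfun n a (lam • d) = 1 := by
  set f : ℝ → ℝ := fun t => hfun n a (t • d)
  have hf0 : f 0 = 1 - a := by simp only [f, zero_smul, hfun_zero]
  obtain ⟨M, hM, hfM⟩ : ∃ M : ℝ, 0 ≤ M ∧ 1 < f M := by
    refine ⟨∑ i, (d i)⁻¹, sum_nonneg fun i _ => (inv_pos.mpr (hd i)).le, one_lt_hfun hn ha1 ?_⟩
    intro i
    have hdi : (d i)⁻¹ ≤ ∑ j, (d j)⁻¹ :=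
      single_le_sum (fun j _ => (inv_pos.mpr (hd j)).le) (mem_univ i)
    calc 1 = (d i)⁻¹ * d i := (inv_mul_cancel₀ (hd i).ne').symm
      _ ≤ (∑ j, (d j)⁻¹) * d i := mul_le_mul_of_nonneg_right hdi (hd i).le
  obtain ⟨t, ht, hft⟩ := intermediate_value_Icc hM
    ((continuousOn_hfun_smul n a fun i => (hd i).le).mono Set.Icc_subset_Ici_self)
    ⟨by linarith, hfM.le⟩
  have ht0 : 0 < t := ht.1.lt_of_ne (by rintro rfl; linarith)
  exact ⟨t, ⟨ht0, hft⟩, fun s ⟨hs, hfs⟩ =>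
    (strictMonoOn_hfun_smul (by omega) ha0 hd).injOn hs.le ht.1 (hfs.trans hft.symm)⟩
end
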